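/- arXiv:1909.08087 — 12 statements merged into one kernel-verified Lean document; each statement's English description precedes it below -/
import Mathlib

section
/- Suppose a point (x₁, y₁, x₂, y₂, Γ, σ) ∈ ℝ⁶ is a zero of the soliton vector field X, i.e. σ = 0 and, for α = 1, 2, x_α y_α = 0, x_α + (Γ + 1)(y_α + 1) = 0, and Γ + Σ_{α=1,2} p_α (1 + y_α)² = 0. If exactly one of x₁, x₂ equals zero, then the point is a Good Fill fixed point: it equals (0, −1, p₂−1, 0, −p₂, 0) when x₁ = 0, and it equals (p₁−1, 0, 0, −1, −p₁, 0) when x₂ = 0. -/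
/-- A zero of the soliton vector field `X` at which exactly one of
`x₁, x₂` vanishes is a Good Fill fixed point: it equals `(0, -1, p₂-1, 0, -p₂, 0)`
when `x₁ = 0`, and `(p₁-1, 0, 0, -1, -p₁, 0)` when `x₂ = 0`. -/
theorem soliton_fixed_point_good_fill
    (p₁ p₂ : ℤ) (hp₁ : 2 ≤ p₁) (hp₂ : 2 ≤ p₂) (lam : ℝ)
    (x₁ y₁ x₂ y₂ Γ σ : ℝ)
    (hσ : σ = 0)
    (h₁ : x₁ * y₁ = 0) (h₂ : x₂ * y₂ = 0)
    (h₃ : x₁ + (Γ + 1) * (y₁ + 1) = 0) (h₄ : x₂ + (Γ + 1) * (y₂ + 1) = 0)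
    (h₅ : Γ + (p₁ : ℝ) * (1 + y₁) ^ 2 + (p₂ : ℝ) * (1 + y₂) ^ 2 = 0)
    (hexact : Xor' (x₁ = 0) (x₂ = 0)) :
    (x₁ = 0 → x₁ = 0 ∧ y₁ = -1 ∧ x₂ = (p₂ : ℝ) - 1 ∧ y₂ = 0 ∧ Γ = -(p₂ : ℝ) ∧ σ = 0) ∧
    (x₂ = 0 → x₁ = (p₁ : ℝ) - 1 ∧ y₁ = 0 ∧ x₂ = 0 ∧ y₂ = -1 ∧ Γ = -(p₁ : ℝ) ∧ σ = 0) := by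
  constructor
  · intro hx₁
    have hx₂ : x₂ ≠ 0 := by
      rcases hexact with ⟨_, h⟩ | ⟨_, h⟩
      · exact h
      · exact absurd hx₁ h
    have hy₂ : y₂ = 0 := by
      rcases mul_eq_zero.mp h₂ with h | h
      · exact absurd h hx₂
      · exact h
    have hΓ1 : Γ + 1 ≠ 0 := by
      intro h
      apply hx₂
      rw [h] at h₄; linarith
    have hy₁ : y₁ = -1 := by
      have : (Γ + 1) * (y₁ + 1) = 0 := by linarith [h₃]
      rcases mul_eq_zero.mp this with h | h
      · exact absurd h hΓ1
      · linarith
    have hΓ : Γ = -(p₂ : ℝ) := by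
      rw [hy₁, hy₂] at h₅; nlinarith [h₅]
    refine ⟨hx₁, hy₁, ?_, hy₂, hΓ, hσ⟩
    rw [hΓ, hy₂] at h₄; linarith
  · intro hx₂
    have hx₁ : x₁ ≠ 0 := by
      rcases hexact with ⟨_, h⟩ | ⟨_, h⟩
      · exact absurd hx₂ h
      · exact h
    have hy₁ : y₁ = 0 := by
      rcases mul_eq_zero.mp h₁ with h | h
      · exact absurd h hx₁
      · exact h
    have hΓ1 : Γ + 1 ≠ 0 := by
      intro h
      apply hx₁
      rw [h] at h₃; linarith
    have hy₂ : y₂ = -1 := by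
      have : (Γ + 1) * (y₂ + 1) = 0 := by linarith [h₄]
      rcases mul_eq_zero.mp this with h | h
      · exact absurd h hΓ1
      · linarith
    have hΓ : Γ = -(p₁ : ℝ) := by
      rw [hy₁, hy₂] at h₅; nlinarith [h₅]
    refine ⟨?_, hy₁, hx₂, hy₂, hΓ, hσ⟩
    rw [hΓ, hy₁] at h₃; linarith
end

section
/- Along any differentiable solution (x₁, y₁, x₂, y₂, Γ, σ) of the soliton system, the quantities J and F satisfy the differential identities J' = 2J − λσ Σ_{α=1,2} p_α y_α (1 + y_α) and F' = (Γ + 1) F + 2J − λσ Σ_{α=1,2} p_α y_α. -/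
/-! Both identities are the chain rule followed by polynomial algebra. The only computation with
content is per block: along `x' = -2xy`, `y' = x + (Γ + 1 - λσ) y + Γ + 1`, the cross terms `∓2xy`
cancel in `(x + (1 + y)²)' = 2x + 2(Γ + 1)(1 + y)² - 2λσ y (1 + y)`, and the `(Γ + 1)`-part is then
absorbed by `(Γ²/2)' = Γ (Γ + Σ p_α (1 + y_α)²)`. -/

theorem hasDerivAt_add_one_add_sq_of_soliton {x y : ℝ → ℝ} {G b τ : ℝ}
    (hx : HasDerivAt x (-2 * x τ * y τ) τ)
    (hy : HasDerivAt y (x τ + (G + 1 - b) * y τ + G + 1) τ) :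
    HasDerivAt (fun t => x t + (1 + y t) ^ 2)
      (2 * x τ + 2 * (G + 1) * (1 + y τ) ^ 2 - 2 * b * y τ * (1 + y τ)) τ := by
  refine (hx.add ((hy.const_add 1).pow 2)).congr_deriv ?_
  simp only [Nat.cast_ofNat]
  ring

theorem soliton_system_J_F_evolution_general
    (p₁ p₂ : ℤ) (lam : ℝ)
    (I : Set ℝ)
    (x₁ y₁ x₂ y₂ Γ σ : ℝ → ℝ)
    (hx₁ : ∀ τ ∈ I, HasDerivAt x₁ (-2 * x₁ τ * y₁ τ) τ)
    (hy₁ : ∀ τ ∈ I, HasDerivAt y₁ (x₁ τ + (Γ τ + 1 - lam * σ τ) * y₁ τ + Γ τ + 1) τ)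
    (hx₂ : ∀ τ ∈ I, HasDerivAt x₂ (-2 * x₂ τ * y₂ τ) τ)
    (hy₂ : ∀ τ ∈ I, HasDerivAt y₂ (x₂ τ + (Γ τ + 1 - lam * σ τ) * y₂ τ + Γ τ + 1) τ)
    (hΓ : ∀ τ ∈ I, HasDerivAt Γ
      (Γ τ + (p₁ : ℝ) * (1 + y₁ τ) ^ 2 + (p₂ : ℝ) * (1 + y₂ τ) ^ 2) τ)
    (J F : ℝ → ℝ)
    (hJ : J = fun τ => (1 / 2) * ((p₁ : ℝ) * (x₁ τ + (1 + y₁ τ) ^ 2)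
        + (p₂ : ℝ) * (x₂ τ + (1 + y₂ τ) ^ 2)) - (1 / 2) * (Γ τ) ^ 2)
    (hF : F = fun τ => Γ τ + (p₁ : ℝ) * (1 + y₁ τ) + (p₂ : ℝ) * (1 + y₂ τ)) :
    ∀ τ ∈ I,
      HasDerivAt J (2 * J τ
        - lam * σ τ * ((p₁ : ℝ) * y₁ τ * (1 + y₁ τ) + (p₂ : ℝ) * y₂ τ * (1 + y₂ τ))) τ ∧
      HasDerivAt F ((Γ τ + 1) * F τ + 2 * J τ
        - lam * σ τ * ((p₁ : ℝ) * y₁ τ + (p₂ : ℝ) * y₂ τ)) τ := by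
  intro τ hτ
  have dΓ := hΓ τ hτ
  have e₁ := hasDerivAt_add_one_add_sq_of_soliton (hx₁ τ hτ) (hy₁ τ hτ)
  have e₂ := hasDerivAt_add_one_add_sq_of_soliton (hx₂ τ hτ) (hy₂ τ hτ)
  subst hJ hF
  constructor
  · refine ((((e₁.const_mul (p₁ : ℝ)).add (e₂.const_mul (p₂ : ℝ))).const_mul (1 / 2)).sub
      ((dΓ.pow 2).const_mul (1 / 2))).congr_deriv ?_
    simp only [Nat.cast_ofNat]
    ring
  · refine ((dΓ.add (((hy₁ τ hτ).const_add 1).const_mul (p₁ : ℝ))).add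
      (((hy₂ τ hτ).const_add 1).const_mul (p₂ : ℝ))).congr_deriv ?_
    ring

/-- Along any differentiable solution of the soliton system, the
quantities `J = ½ Σ p_α (x_α + (1+y_α)²) − ½Γ²` and `F = Γ + Σ p_α (1+y_α)` satisfy
`J' = 2J − λσ Σ p_α y_α (1+y_α)` and `F' = (Γ+1)F + 2J − λσ Σ p_α y_α`. -/
theorem soliton_system_J_F_evolution
    (p₁ p₂ : ℤ) (hp₁ : 2 ≤ p₁) (hp₂ : 2 ≤ p₂) (lam : ℝ)
    (I : Set ℝ)
    (x₁ y₁ x₂ y₂ Γ σ : ℝ → ℝ)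
    (hx₁ : ∀ τ ∈ I, HasDerivAt x₁ (-2 * x₁ τ * y₁ τ) τ)
    (hy₁ : ∀ τ ∈ I, HasDerivAt y₁ (x₁ τ + (Γ τ + 1 - lam * σ τ) * y₁ τ + Γ τ + 1) τ)
    (hx₂ : ∀ τ ∈ I, HasDerivAt x₂ (-2 * x₂ τ * y₂ τ) τ)
    (hy₂ : ∀ τ ∈ I, HasDerivAt y₂ (x₂ τ + (Γ τ + 1 - lam * σ τ) * y₂ τ + Γ τ + 1) τ)
    (hΓ : ∀ τ ∈ I, HasDerivAt Γ
      (Γ τ + (p₁ : ℝ) * (1 + y₁ τ) ^ 2 + (p₂ : ℝ) * (1 + y₂ τ) ^ 2) τ)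
    (hσ : ∀ τ ∈ I, HasDerivAt σ (2 * σ τ) τ)
    (J F : ℝ → ℝ)
    (hJ : J = fun τ => (1 / 2) * ((p₁ : ℝ) * (x₁ τ + (1 + y₁ τ) ^ 2)
        + (p₂ : ℝ) * (x₂ τ + (1 + y₂ τ) ^ 2)) - (1 / 2) * (Γ τ) ^ 2)
    (hF : F = fun τ => Γ τ + (p₁ : ℝ) * (1 + y₁ τ) + (p₂ : ℝ) * (1 + y₂ τ)) :
    ∀ τ ∈ I,
      HasDerivAt J (2 * J τ
        - lam * σ τ * ((p₁ : ℝ) * y₁ τ * (1 + y₁ τ) + (p₂ : ℝ) * y₂ τ * (1 + y₂ τ))) τ ∧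
      HasDerivAt F ((Γ τ + 1) * F τ + 2 * J τ
        - lam * σ τ * ((p₁ : ℝ) * y₁ τ + (p₂ : ℝ) * y₂ τ)) τ :=
  soliton_system_J_F_evolution_general p₁ p₂ lam I x₁ y₁ x₂ y₂ Γ σ hx₁ hy₁ hx₂ hy₂ hΓ J F hJ hF
end

section
/- Let (x₁, y₁, x₂, y₂, Γ, σ) be a differentiable solution of the soliton system on an interval I with σ(τ) = 0, x₁(τ) > 0, x₂(τ) > 0, and F(τ) = 0 for all τ ∈ I. Then the Lyapunov function W = (1/2) Σ_{α=1,2} p_α (x_α − (n−1) log x_α + y_α²) satisfies W'(τ) = Σ_{α=1,2} p_α ((Γ(τ)+n) y_α(τ) + (Γ(τ)+1) y_α(τ)²) for all τ ∈ I; if in addition Γ(τ) + 1 ≤ 0, then W'(τ) ≤ −(Γ(τ)+n)². -/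
/-!
Along the soliton system with `σ ≡ 0`, a single summand `x - (n - 1) log x + y²` of `2W` has
derivative `-2xy + 2(n - 1)y + 2y(x + (Γ + 1)y + Γ + 1) = 2((Γ + n)y + (Γ + 1)y²)`: the `xy`
terms cancel. The constraint `F = 0` says `p₁y₁ + p₂y₂ = -(Γ + n)`, which turns
`W' = (Γ + n)(p₁y₁ + p₂y₂) + (Γ + 1)(p₁y₁² + p₂y₂²)` into `-(Γ + n)²` plus a term that is
nonpositive once `Γ + 1 ≤ 0`.
-/

open Real

theorem hasDerivAt_soliton_lyapunov_term {x y : ℝ → ℝ} {t g : ℝ} (n : ℝ)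
    (hx : HasDerivAt x (-2 * x t * y t) t)
    (hy : HasDerivAt y (x t + (g + 1) * y t + g + 1) t) (hx0 : x t ≠ 0) :
    HasDerivAt (fun s => x s - (n - 1) * log (x s) + y s ^ 2)
      (2 * ((g + n) * y t + (g + 1) * y t ^ 2)) t := by
  refine ((hx.sub ((hx.log hx0).const_mul (n - 1))).add (hy.pow 2)).congr_deriv ?_
  field_simp
  ring

theorem weighted_quadratic_le_neg_sq {p₁ p₂ y₁ y₂ g s : ℝ} (hp₁ : 0 ≤ p₁) (hp₂ : 0 ≤ p₂)
    (hsum : p₁ * y₁ + p₂ * y₂ = -s) (hg : g ≤ 0) :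
    p₁ * (s * y₁ + g * y₁ ^ 2) + p₂ * (s * y₂ + g * y₂ ^ 2) ≤ -s ^ 2 := by
  have hsq : 0 ≤ p₁ * y₁ ^ 2 + p₂ * y₂ ^ 2 := by positivity
  calc p₁ * (s * y₁ + g * y₁ ^ 2) + p₂ * (s * y₂ + g * y₂ ^ 2)
      = -s ^ 2 + g * (p₁ * y₁ ^ 2 + p₂ * y₂ ^ 2) := by linear_combination s * hsum
    _ ≤ -s ^ 2 := by nlinarith

theorem soliton_system_lyapunov_general
    (p₁ p₂ : ℤ) (hp₁ : 2 ≤ p₁) (hp₂ : 2 ≤ p₂) (lam : ℝ)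
    (n : ℝ) (hn : n = (p₁ : ℝ) + (p₂ : ℝ))
    (I : Set ℝ)
    (x₁ y₁ x₂ y₂ Γ σ : ℝ → ℝ)
    (hx₁ : ∀ τ ∈ I, HasDerivAt x₁ (-2 * x₁ τ * y₁ τ) τ)
    (hy₁ : ∀ τ ∈ I, HasDerivAt y₁ (x₁ τ + (Γ τ + 1 - lam * σ τ) * y₁ τ + Γ τ + 1) τ)
    (hx₂ : ∀ τ ∈ I, HasDerivAt x₂ (-2 * x₂ τ * y₂ τ) τ)
    (hy₂ : ∀ τ ∈ I, HasDerivAt y₂ (x₂ τ + (Γ τ + 1 - lam * σ τ) * y₂ τ + Γ τ + 1) τ)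
    (hσ0 : ∀ τ ∈ I, σ τ = 0)
    (hx₁pos : ∀ τ ∈ I, 0 < x₁ τ) (hx₂pos : ∀ τ ∈ I, 0 < x₂ τ)
    (hF0 : ∀ τ ∈ I, Γ τ + (p₁ : ℝ) * (1 + y₁ τ) + (p₂ : ℝ) * (1 + y₂ τ) = 0)
    (W D : ℝ → ℝ)
    (hW : W = fun τ => (1 / 2) * ((p₁ : ℝ) * (x₁ τ - (n - 1) * Real.log (x₁ τ) + (y₁ τ) ^ 2)
        + (p₂ : ℝ) * (x₂ τ - (n - 1) * Real.log (x₂ τ) + (y₂ τ) ^ 2)))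
    (hD : D = fun τ => (p₁ : ℝ) * ((Γ τ + n) * y₁ τ + (Γ τ + 1) * (y₁ τ) ^ 2)
        + (p₂ : ℝ) * ((Γ τ + n) * y₂ τ + (Γ τ + 1) * (y₂ τ) ^ 2)) :
    ∀ τ ∈ I, HasDerivAt W (D τ) τ ∧ (Γ τ + 1 ≤ 0 → D τ ≤ -(Γ τ + n) ^ 2) := by
  intro τ hτ
  have hy₁' := hy₁ τ hτ
  have hy₂' := hy₂ τ hτ
  rw [hσ0 τ hτ, mul_zero, sub_zero] at hy₁' hy₂'
  have hW₁ := hasDerivAt_soliton_lyapunov_term n (hx₁ τ hτ) hy₁' (hx₁pos τ hτ).ne'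
  have hW₂ := hasDerivAt_soliton_lyapunov_term n (hx₂ τ hτ) hy₂' (hx₂pos τ hτ).ne'
  subst hW hD
  refine ⟨(((hW₁.const_mul _).add (hW₂.const_mul _)).const_mul (1 / 2 : ℝ)).congr_deriv
    (by ring), fun hΓ₁ => weighted_quadratic_le_neg_sq ?_ ?_ ?_ hΓ₁⟩
  · exact_mod_cast (by omega : (0 : ℤ) ≤ p₁)
  · exact_mod_cast (by omega : (0 : ℤ) ≤ p₂)
  · linear_combination hF0 τ hτ + hn

/-- Along a solution of the soliton system with `σ ≡ 0`,
`x₁, x₂ > 0` and `F ≡ 0`, the Lyapunov function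
`W = ½ Σ p_α (x_α − (n−1) log x_α + y_α²)` satisfies
`W' = Σ p_α ((Γ+n) y_α + (Γ+1) y_α²)`, and if moreover `Γ + 1 ≤ 0` then
`W' ≤ −(Γ+n)²`. -/
theorem soliton_system_lyapunov
    (p₁ p₂ : ℤ) (hp₁ : 2 ≤ p₁) (hp₂ : 2 ≤ p₂) (lam : ℝ)
    (n : ℝ) (hn : n = (p₁ : ℝ) + (p₂ : ℝ))
    (I : Set ℝ)
    (x₁ y₁ x₂ y₂ Γ σ : ℝ → ℝ)
    (hx₁ : ∀ τ ∈ I, HasDerivAt x₁ (-2 * x₁ τ * y₁ τ) τ)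
    (hy₁ : ∀ τ ∈ I, HasDerivAt y₁ (x₁ τ + (Γ τ + 1 - lam * σ τ) * y₁ τ + Γ τ + 1) τ)
    (hx₂ : ∀ τ ∈ I, HasDerivAt x₂ (-2 * x₂ τ * y₂ τ) τ)
    (hy₂ : ∀ τ ∈ I, HasDerivAt y₂ (x₂ τ + (Γ τ + 1 - lam * σ τ) * y₂ τ + Γ τ + 1) τ)
    (hΓ : ∀ τ ∈ I, HasDerivAt Γ
      (Γ τ + (p₁ : ℝ) * (1 + y₁ τ) ^ 2 + (p₂ : ℝ) * (1 + y₂ τ) ^ 2) τ)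
    (hσ : ∀ τ ∈ I, HasDerivAt σ (2 * σ τ) τ)
    (hσ0 : ∀ τ ∈ I, σ τ = 0)
    (hx₁pos : ∀ τ ∈ I, 0 < x₁ τ) (hx₂pos : ∀ τ ∈ I, 0 < x₂ τ)
    (hF0 : ∀ τ ∈ I, Γ τ + (p₁ : ℝ) * (1 + y₁ τ) + (p₂ : ℝ) * (1 + y₂ τ) = 0)
    (W D : ℝ → ℝ)
    (hW : W = fun τ => (1 / 2) * ((p₁ : ℝ) * (x₁ τ - (n - 1) * Real.log (x₁ τ) + (y₁ τ) ^ 2)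
        + (p₂ : ℝ) * (x₂ τ - (n - 1) * Real.log (x₂ τ) + (y₂ τ) ^ 2)))
    (hD : D = fun τ => (p₁ : ℝ) * ((Γ τ + n) * y₁ τ + (Γ τ + 1) * (y₁ τ) ^ 2)
        + (p₂ : ℝ) * ((Γ τ + n) * y₂ τ + (Γ τ + 1) * (y₂ τ) ^ 2)) :
    ∀ τ ∈ I, HasDerivAt W (D τ) τ ∧ (Γ τ + 1 ≤ 0 → D τ ≤ -(Γ τ + n) ^ 2) :=
  soliton_system_lyapunov_general p₁ p₂ hp₁ hp₂ lam n hn I x₁ y₁ x₂ y₂ Γ σ hx₁ hy₁ hx₂ hy₂ hσ0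
    hx₁pos hx₂pos hF0 W D hW hD
end

section
/- Let dX_gf be the Jacobian matrix of the soliton vector field X at the Good Fill fixed point gf = (p₁−1, 0, 0, −1, −p₁, 0), namely (in coordinate order (x₁, y₁, x₂, y₂, Γ, σ)) the 6×6 matrix with rows (0, −2(p₁−1), 0, 0, 0, 0), (1, −(p₁−1), 0, 0, 1, 0), (0, 0, 2, 0, 0, 0), (0, 0, 1, −(p₁−1), 0, λ), (0, 2p₁, 0, 0, 1, 0), (0, 0, 0, 0, 0, 2). Then its characteristic polynomial is det(μ·I − dX_gf) = (μ + p₁ − 1)² (μ + 1)(μ − 2)³; in particular the eigenvalues of dX_gf are −(p₁−1) with algebraic multiplicity two, −1 with multiplicity one, and +2 with multiplicity three. -/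
open Polynomial

open Matrix in
/-- Determinant of the characteristic matrix, computed by cofactor expansion. -/
theorem soliton_gf_det_aux (a lam : ℝ) :
    (!![(X:ℝ[X]), C (2*(a-1)), 0, 0, 0, 0;
         -1, X + C (a-1), 0, 0, -1, 0;
         0, 0, X - 2, 0, 0, 0;
         0, 0, -1, X + C (a-1), 0, -C lam;
         0, -C (2*a), 0, 0, X - 1, 0;
         0, 0, 0, 0, 0, X - 2]).det
      = (X + C (a - 1)) ^ 2 * (X + 1) * (X - 2) ^ 3 := by
  have c5 : ∀ {α : Type} (x : α) (u : Fin 5 → α), Matrix.vecCons x u 5 = u 4 :=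
    fun _ _ => rfl
  have e6 : (!![(X:ℝ[X]), C (2*(a-1)), 0, 0, 0, 0;
         -1, X + C (a-1), 0, 0, -1, 0;
         0, 0, X - 2, 0, 0, 0;
         0, 0, -1, X + C (a-1), 0, -C lam;
         0, -C (2*a), 0, 0, X - 1, 0;
         0, 0, 0, 0, 0, X - 2]).submatrix (Fin.succAbove 5) (Fin.succAbove 5)
      = !![(X:ℝ[X]), C (2*(a-1)), 0, 0, 0;
       -1, X + C (a-1), 0, 0, -1;
       0, 0, X - 2, 0, 0;
       0, 0, -1, X + C (a-1), 0;
       0, -C (2*a), 0, 0, X - 1] := by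
    apply Matrix.ext; intro i j
    fin_cases i <;> fin_cases j <;> rfl
  have e5 : (!![(X:ℝ[X]), C (2*(a-1)), 0, 0, 0;
       -1, X + C (a-1), 0, 0, -1;
       0, 0, X - 2, 0, 0;
       0, 0, -1, X + C (a-1), 0;
       0, -C (2*a), 0, 0, X - 1]).submatrix (Fin.succAbove 2) (Fin.succAbove 2)
      = !![(X:ℝ[X]), C (2*(a-1)), 0, 0;
       -1, X + C (a-1), 0, -1;
       0, 0, X + C (a-1), 0;
       0, -C (2*a), 0, X - 1] := by
    apply Matrix.ext; intro i j
    fin_cases i <;> fin_cases j <;> rfl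
  have e4 : (!![(X:ℝ[X]), C (2*(a-1)), 0, 0;
       -1, X + C (a-1), 0, -1;
       0, 0, X + C (a-1), 0;
       0, -C (2*a), 0, X - 1]).submatrix (Fin.succAbove 2) (Fin.succAbove 2)
      = !![(X:ℝ[X]), C (2*(a-1)), 0;
       -1, X + C (a-1), -1;
       0, -C (2*a), X - 1] := by
    apply Matrix.ext; intro i j
    fin_cases i <;> fin_cases j <;> rfl
  have h3 : (!![(X:ℝ[X]), C (2*(a-1)), 0;
       -1, X + C (a-1), -1;
       0, -C (2*a), X - 1]).det = (X + C (a-1)) * (X + 1) * (X - 2) := by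
    rw [Matrix.det_fin_three]
    simp [_root_.map_mul, _root_.map_sub, _root_.map_ofNat]
    ring
  rw [Matrix.det_succ_row _ 5, Fin.sum_univ_six, e6]
  simp only [c5, Matrix.cons_val', Matrix.cons_val_zero, Matrix.cons_val_one,
    Matrix.head_cons, Matrix.head_fin_const, Matrix.cons_val_two,
    Matrix.cons_val_three, Matrix.cons_val_four, Matrix.tail_cons,
    Matrix.empty_val', Matrix.cons_val_fin_one, Matrix.of_apply,
    mul_zero, zero_mul, add_zero, zero_add]
  rw [Matrix.det_succ_row _ 2, Fin.sum_univ_five, e5]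
  simp only [c5, Matrix.cons_val', Matrix.cons_val_zero, Matrix.cons_val_one,
    Matrix.head_cons, Matrix.head_fin_const, Matrix.cons_val_two,
    Matrix.cons_val_three, Matrix.cons_val_four, Matrix.tail_cons,
    Matrix.empty_val', Matrix.cons_val_fin_one, Matrix.of_apply,
    mul_zero, zero_mul, add_zero, zero_add]
  rw [Matrix.det_succ_row _ 2, Fin.sum_univ_four, e4]
  simp only [c5, Matrix.cons_val', Matrix.cons_val_zero, Matrix.cons_val_one,
    Matrix.head_cons, Matrix.head_fin_const, Matrix.cons_val_two,
    Matrix.cons_val_three, Matrix.cons_val_four, Matrix.tail_cons,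
    Matrix.empty_val', Matrix.cons_val_fin_one, Matrix.of_apply,
    mul_zero, zero_mul, add_zero, zero_add]
  rw [h3]
  norm_num
  ring

open Matrix in
/-- The characteristic matrix of the linearization, identified explicitly. -/
theorem soliton_gf_charmatrix_aux (a lam : ℝ) :
    charmatrix (!![0, -2 * (a - 1), 0, 0, 0, 0;
                 1, -(a - 1), 0, 0, 1, 0;
                 0, 0, 2, 0, 0, 0;
                 0, 0, 1, -(a - 1), 0, lam;
                 0, 2 * a, 0, 0, 1, 0;
                 0, 0, 0, 0, 0, 2] : Matrix (Fin 6) (Fin 6) ℝ)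
      = !![(X:ℝ[X]), C (2*(a-1)), 0, 0, 0, 0;
         -1, X + C (a-1), 0, 0, -1, 0;
         0, 0, X - 2, 0, 0, 0;
         0, 0, -1, X + C (a-1), 0, -C lam;
         0, -C (2*a), 0, 0, X - 1, 0;
         0, 0, 0, 0, 0, X - 2] := by
  have c5 : ∀ {α : Type} (x : α) (u : Fin 5 → α), Matrix.vecCons x u 5 = u 4 :=
    fun _ _ => rfl
  apply Matrix.ext; intro i j
  fin_cases i <;> fin_cases j <;>
    simp [c5, charmatrix_apply_eq, charmatrix_apply_ne, _root_.map_neg,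
      _root_.map_mul, _root_.map_sub, _root_.map_ofNat, sub_neg_eq_add,
      Matrix.vecHead, Matrix.vecTail, Function.comp] <;>
    ring

/-- Roots of the factored characteristic polynomial. -/
theorem soliton_gf_roots_aux (b : ℝ) :
    ((X + C b) ^ 2 * (X + 1) * (X - 2) ^ 3 : ℝ[X]).roots
      = {-b, -b, -1, 2, 2, 2} := by
  have h1 : (X + C b : ℝ[X]) = X - C (-b) := by rw [map_neg, sub_neg_eq_add]
  have h2 : (X + 1 : ℝ[X]) = X - C (-1) := by
    rw [map_neg, sub_neg_eq_add, C_1]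
  have h3 : (X - 2 : ℝ[X]) = X - C 2 := by rw [map_ofNat]
  rw [h1, h2, h3]
  have hne : ∀ c : ℝ, (X - C c : ℝ[X]) ≠ 0 := fun c => (monic_X_sub_C c).ne_zero
  rw [roots_mul (mul_ne_zero (mul_ne_zero (pow_ne_zero _ (hne _)) (hne _))
      (pow_ne_zero _ (hne _))),
    roots_mul (mul_ne_zero (pow_ne_zero _ (hne _)) (hne _)),
    roots_pow, roots_pow, roots_X_sub_C, roots_X_sub_C, roots_X_sub_C]
  rfl

/-- The characteristic polynomial of the linearization of the
soliton vector field at the Good Fill fixed point `gf = (p₁-1, 0, 0, -1, -p₁, 0)` is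
`(μ + p₁ - 1)² (μ + 1)(μ - 2)³`; in particular its eigenvalues are `-(p₁-1)` with
multiplicity two, `-1` with multiplicity one, and `+2` with multiplicity three. -/
theorem charpoly_linearization_at_good_fill
    (p₁ p₂ : ℤ) (hp₁ : 2 ≤ p₁) (hp₂ : 2 ≤ p₂) (lam : ℝ)
    (M : Matrix (Fin 6) (Fin 6) ℝ)
    (hM : M = !![0, -2 * ((p₁ : ℝ) - 1), 0, 0, 0, 0;
                 1, -((p₁ : ℝ) - 1), 0, 0, 1, 0;
                 0, 0, 2, 0, 0, 0;
                 0, 0, 1, -((p₁ : ℝ) - 1), 0, lam;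
                 0, 2 * (p₁ : ℝ), 0, 0, 1, 0;
                 0, 0, 0, 0, 0, 2]) :
    M.charpoly = (X + C ((p₁ : ℝ) - 1)) ^ 2 * (X + 1) * (X - 2) ^ 3 ∧
    M.charpoly.roots = {-((p₁ : ℝ) - 1), -((p₁ : ℝ) - 1), -1, 2, 2, 2} := by
  have hcp : M.charpoly = (X + C ((p₁ : ℝ) - 1)) ^ 2 * (X + 1) * (X - 2) ^ 3 := by
    subst hM
    rw [Matrix.charpoly, soliton_gf_charmatrix_aux ((p₁ : ℝ)) lam,
      soliton_gf_det_aux ((p₁ : ℝ)) lam]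
  exact ⟨hcp, by rw [hcp, soliton_gf_roots_aux]⟩
end

section
/- In coordinates (x₁, y₁, x₂, y₂, Γ, σ), let dX_gf be the Jacobian matrix of the soliton vector field X at gf = (p₁−1, 0, 0, −1, −p₁, 0) (the 6×6 matrix with rows (0, −2(p₁−1), 0, 0, 0, 0), (1, −(p₁−1), 0, 0, 1, 0), (0, 0, 2, 0, 0, 0), (0, 0, 1, −(p₁−1), 0, λ), (0, 2p₁, 0, 0, 1, 0), (0, 0, 0, 0, 0, 2)), and define the linear functionals dJ_gf = (1/2)p₁ dx₁ + p₁ dy₁ + (1/2)p₂ dx₂ + p₁ dΓ and dF_gf = p₁ dy₁ + p₂ dy₂ + dΓ. Set E₁ = (−(p₁−1), 1, 0, 0, 2p₁, 0), E₂ = (0, 0, p₁+1, 1, 0, 0), v = p₂E₁ − 3p₁E₂, u₁ = (2p₂, p₂, 0, −(p₁−2), −2p₂, 0), and u₂ = (2(p₁−1), 1, 0, 0, −p₁, 0). Then dX_gf·v = 2v, dX_gf·u₁ = −(p₁−1)u₁, dX_gf·u₂ = −u₂, and each of v, u₁, u₂ lies in the joint kernel of dJ_gf and dF_gf. -/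
@[simp] lemma vecCons_apply_5 (a : ℝ) (f : Fin 5 → ℝ) : Matrix.vecCons a f (5 : Fin 6) = f 4 := rfl
@[simp] lemma vecCons_apply_4 (a : ℝ) (f : Fin 4 → ℝ) : Matrix.vecCons a f (4 : Fin 5) = f 3 := rfl
@[simp] lemma vecCons_apply_3 (a : ℝ) (f : Fin 3 → ℝ) : Matrix.vecCons a f (3 : Fin 4) = f 2 := rfl
@[simp] lemma vecCons_apply_2 (a : ℝ) (f : Fin 2 → ℝ) : Matrix.vecCons a f (2 : Fin 3) = f 1 := rfl
@[simp] lemma vecCons_apply_1 (a : ℝ) (f : Fin 1 → ℝ) : Matrix.vecCons a f (1 : Fin 2) = f 0 := rfl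

/-- At the Good Fill fixed point, the vector `v = p₂E₁ − 3p₁E₂` is
an eigenvector of `dX_gf` with eigenvalue `2`, the vectors `u₁, u₂` are eigenvectors
with eigenvalues `-(p₁-1)` and `-1` respectively, and all three lie in the joint
kernel of the differentials `dJ_gf` and `dF_gf`. -/
theorem good_fill_eigenvectors_in_E
    (p₁ p₂ : ℤ) (hp₁ : 2 ≤ p₁) (hp₂ : 2 ≤ p₂) (lam : ℝ)
    (M : Matrix (Fin 6) (Fin 6) ℝ)
    (hM : M = !![0, -2 * ((p₁ : ℝ) - 1), 0, 0, 0, 0;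
                 1, -((p₁ : ℝ) - 1), 0, 0, 1, 0;
                 0, 0, 2, 0, 0, 0;
                 0, 0, 1, -((p₁ : ℝ) - 1), 0, lam;
                 0, 2 * (p₁ : ℝ), 0, 0, 1, 0;
                 0, 0, 0, 0, 0, 2])
    (dJ dF : (Fin 6 → ℝ) → ℝ)
    (hdJ : dJ = fun w => (1 / 2) * (p₁ : ℝ) * w 0 + (p₁ : ℝ) * w 1
        + (1 / 2) * (p₂ : ℝ) * w 2 + (p₁ : ℝ) * w 4)
    (hdF : dF = fun w => (p₁ : ℝ) * w 1 + (p₂ : ℝ) * w 3 + w 4)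
    (E₁ E₂ v u₁ u₂ : Fin 6 → ℝ)
    (hE₁ : E₁ = ![-((p₁ : ℝ) - 1), 1, 0, 0, 2 * (p₁ : ℝ), 0])
    (hE₂ : E₂ = ![0, 0, (p₁ : ℝ) + 1, 1, 0, 0])
    (hv : v = (p₂ : ℝ) • E₁ - (3 * (p₁ : ℝ)) • E₂)
    (hu₁ : u₁ = ![2 * (p₂ : ℝ), (p₂ : ℝ), 0, -((p₁ : ℝ) - 2), -2 * (p₂ : ℝ), 0])
    (hu₂ : u₂ = ![2 * ((p₁ : ℝ) - 1), 1, 0, 0, -(p₁ : ℝ), 0]) :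
    M.mulVec v = (2 : ℝ) • v ∧
    M.mulVec u₁ = (-((p₁ : ℝ) - 1)) • u₁ ∧
    M.mulVec u₂ = (-1 : ℝ) • u₂ ∧
    dJ v = 0 ∧ dF v = 0 ∧ dJ u₁ = 0 ∧ dF u₁ = 0 ∧ dJ u₂ = 0 ∧ dF u₂ = 0 := by
  subst hM hdJ hdF hE₁ hE₂ hv hu₁ hu₂
  refine ⟨?_, ?_, ?_, ?_, ?_, ?_, ?_, ?_, ?_⟩ <;>
    first
    | (funext i; fin_cases i <;>
        simp [Matrix.mulVec, dotProduct, Fin.sum_univ_six, Pi.smul_apply,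
          Pi.sub_apply, Matrix.cons_val_zero, Matrix.cons_val_one] <;> ring)
    | (simp [Pi.smul_apply, Pi.sub_apply] <;> ring)
end

section
/- Fix integers p₁, p₂ ≥ 2, set n = p₁ + p₂, fix λ ∈ {−1, +1}, and let ℓ > 0. Let ξ₁, ξ₂, y₁, y₂, γ : [ℓ, ∞) → ℝ be differentiable functions satisfying, for all s ≥ ℓ and α = 1, 2, s·ξ_α'(s) = −2(n−1+ξ_α(s)) y_α(s), s·y_α'(s) = ξ_α(s) + (γ(s) − n + 1 − λs²) y_α(s) + γ(s), and s·γ'(s) = γ(s) + Σ_{β=1,2} p_β (2y_β(s) + y_β(s)²), and assume sup_s |ξ_α(s)| < ∞, sup_s |y_α(s)| < ∞, and sup_s |γ(s)/s| < ∞. Then there exist constants ξ_{1,∞}, ξ_{2,∞}, K_∞ ∈ ℝ such that, as s → ∞, ξ_α(s) = ξ_{α,∞} + O(1/s) for α = 1, 2, y_α(s) = O(1/s) for α = 1, 2, and γ(s) = K_∞ s + O(1/s). -/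
/-!
Put `g := (ξ + (γ - n + 1) y + γ) / s`, which is bounded; the `y`-equation becomes
`y' = -λ s y + g`. For `λ > 0` the level sets of `s y` are barriers, and for `λ < 0` boundedness
of `y` rules out `s y` ever becoming large, so in both cases `y = O(1/s)`. Then
`ξ' = O(1/s²)` and `(γ/s)' = (Σ p_β (2 y_β + y_β²)) / s² = O(1/s³)`, and a function whose
derivative is `O(1/s^(m+1))` converges at the rate `O(1/s^m)`; the limits are `ξ_{α,∞}` and
`K_∞ = lim γ/s`.
-/

open Filter Asymptotics Set

section HalfLine

variable {f f' : ℝ → ℝ} {a : ℝ}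

lemma monotoneOn_Ici_of_hasDerivAt_nonneg (hf : ∀ s, a ≤ s → HasDerivAt f (f' s) s)
    (hf' : ∀ s, a ≤ s → 0 ≤ f' s) : MonotoneOn f (Ici a) :=
  monotoneOn_of_hasDerivWithinAt_nonneg (convex_Ici a)
    (fun s hs => (hf s hs).continuousAt.continuousWithinAt)
    (fun s hs => (hf s (interior_subset hs)).hasDerivWithinAt)
    (fun s hs => hf' s (interior_subset hs))

lemma le_of_hasDerivAt_neg_of_eq {B : ℝ} (hf : ∀ s, a ≤ s → HasDerivAt f (f' s) s)
    (ha : f a ≤ B) (hB : ∀ s, a ≤ s → f s = B → f' s < 0) : ∀ s, a ≤ s → f s ≤ B := fun _ hs =>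
  image_le_of_deriv_right_lt_deriv_boundary (B := fun _ => B) (B' := fun _ => 0)
    (fun x hx => (hf x hx.1).continuousAt.continuousWithinAt)
    (fun x hx => (hf x hx.1).hasDerivWithinAt) ha (fun x => hasDerivAt_const x B)
    (fun x hx => hB x hx.1) ⟨hs, le_rfl⟩

lemma ge_of_hasDerivAt_pos_of_eq {B : ℝ} (hf : ∀ s, a ≤ s → HasDerivAt f (f' s) s)
    (ha : B ≤ f a) (hB : ∀ s, a ≤ s → f s = B → 0 < f' s) : ∀ s, a ≤ s → B ≤ f s := by
  intro s hs
  have := le_of_hasDerivAt_neg_of_eq (f := fun t => -f t) (fun t ht => (hf t ht).neg)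
    (neg_le_neg ha) (fun t ht hft => neg_neg_of_pos (hB t ht (neg_inj.1 hft))) s hs
  exact neg_le_neg_iff.1 this

lemma add_mul_sub_le_of_le_hasDerivAt {δ : ℝ} (hf : ∀ s, a ≤ s → HasDerivAt f (f' s) s)
    (hδ : ∀ s, a ≤ s → δ ≤ f' s) : ∀ s, a ≤ s → f a + δ * (s - a) ≤ f s := by
  intro s hs
  have := monotoneOn_Ici_of_hasDerivAt_nonneg (f := fun t => f t - δ * t)
    (fun t ht => (hf t ht).sub ((hasDerivAt_id t).const_mul δ))
    (fun t ht => by simpa using hδ t ht) self_mem_Ici hs hs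
  simp only at this
  linarith

-- `g` is squeezed between the antitone `g + k` and the monotone `g - k`.
lemma exists_abs_sub_le_of_abs_deriv_le {g g' k k' : ℝ → ℝ}
    (hg : ∀ s, a ≤ s → HasDerivAt g (g' s) s) (hk : ∀ s, a ≤ s → HasDerivAt k (k' s) s)
    (hk₀ : ∀ s, a ≤ s → 0 ≤ k s) (hbound : ∀ s, a ≤ s → |g' s| ≤ -k' s) :
    ∃ L, ∀ s, a ≤ s → |g s - L| ≤ k s := by
  have hupper : AntitoneOn (fun s => g s + k s) (Ici a) := by
    have := monotoneOn_Ici_of_hasDerivAt_nonneg (f := fun s => -(g s + k s))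
      (fun s hs => ((hg s hs).add (hk s hs)).neg)
      (fun s hs => by linarith [(abs_le.1 (hbound s hs)).2])
    exact fun s hs t ht hst => neg_le_neg_iff.1 (this hs ht hst)
  have hlower : MonotoneOn (fun s => g s - k s) (Ici a) :=
    monotoneOn_Ici_of_hasDerivAt_nonneg (fun s hs => (hg s hs).sub (hk s hs))
      (fun s hs => by linarith [(abs_le.1 (hbound s hs)).1])
  have hsqueeze : ∀ s, a ≤ s → ∀ t, a ≤ t → g s - k s ≤ g t + k t := by
    intro s hs t ht
    rcases le_total s t with hst | hts
    · linarith [hlower hs ht hst, hk₀ t ht]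
    · linarith [hupper ht hs hts, hk₀ s hs]
  set S := (fun t => g t + k t) '' Ici a
  have hS : BddBelow S := ⟨g a - k a, by
    rintro _ ⟨t, ht, rfl⟩
    exact hsqueeze a le_rfl t ht⟩
  refine ⟨sInf S, fun s hs => abs_sub_le_iff.2 ⟨?_, ?_⟩⟩
  · have : g s - k s ≤ sInf S :=
      le_csInf ⟨_, mem_image_of_mem _ self_mem_Ici⟩ (by
        rintro _ ⟨t, ht, rfl⟩
        exact hsqueeze s hs t ht)
    linarith
  · linarith [csInf_le hS (mem_image_of_mem _ (mem_Ici.2 hs))]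

end HalfLine

section LinearDecay

variable {lam a : ℝ} {y g : ℝ → ℝ}

lemma exists_mul_le_of_stable (hlam : 0 < lam) (ha : 1 ≤ a)
    (hy : ∀ s, a ≤ s → HasDerivAt y (-lam * s * y s + g s) s)
    {M C : ℝ} (hg : ∀ s, a ≤ s → g s ≤ M) (hC : ∀ s, a ≤ s → y s ≤ C) (hC₀ : 0 ≤ C) :
    ∃ K, ∀ s, a ≤ s → s * y s ≤ K := by
  set K := max (a * y a) ((M + C + 1) / lam)
  have hK : M + C + 1 ≤ lam * K := by
    rw [← div_le_iff₀' hlam]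
    exact le_max_right _ _
  refine ⟨K, le_of_hasDerivAt_neg_of_eq (fun s hs => (hasDerivAt_id s).mul (hy s hs))
    (le_max_left _ _) fun s hs hsK => ?_⟩
  have hs1 : 1 ≤ s := ha.trans hs
  have : s * (-lam * s * y s + g s) = -lam * s * K + s * g s := by rw [← hsK]; ring
  simp only [id, one_mul, this]
  -- `(s y)' = y - lam s K + s g ≤ C + s M - s (M + C + 1) ≤ -s` on the level set `s y = K`
  nlinarith [hg s hs, hC s hs, mul_le_mul_of_nonneg_left (hg s hs) (by linarith : (0:ℝ) ≤ s)]

/-- If `s y` ever exceeded `M / (-lam)`, the forcing could no longer hold `y` back: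
`y` would stay above its value there and then grow at a positive linear rate. -/
lemma exists_mul_le_of_unstable (hlam : lam < 0) (ha : 0 < a)
    (hy : ∀ s, a ≤ s → HasDerivAt y (-lam * s * y s + g s) s)
    {M C : ℝ} (hg : ∀ s, a ≤ s → -M ≤ g s) (hC : ∀ s, a ≤ s → y s ≤ C) (hM : 0 ≤ M) :
    ∃ K, ∀ s, a ≤ s → s * y s ≤ K := by
  refine ⟨M / -lam, fun s₁ hs₁ => ?_⟩
  by_contra! hgt
  rw [div_lt_iff₀ (neg_pos.2 hlam)] at hgt
  have hs₁0 : 0 < s₁ := ha.trans_le hs₁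
  have hy₁ : 0 < y s₁ := by
    by_contra! h
    nlinarith [mul_pos hs₁0 (neg_pos.2 hlam)]
  have hy_s₁ : ∀ s, s₁ ≤ s → HasDerivAt y (-lam * s * y s + g s) s :=
    fun s hs => hy s (hs₁.trans hs)
  have hrate : ∀ s, s₁ ≤ s → y s₁ ≤ y s → -lam * s₁ * y s₁ - M ≤ -lam * s * y s + g s :=
    fun s hs hys => by
      have := mul_le_mul hs hys hy₁.le (hs₁0.le.trans hs)
      nlinarith [hg s (hs₁.trans hs), mul_le_mul_of_nonneg_left this (neg_nonneg.2 hlam.le)]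
  have hstay : ∀ s, s₁ ≤ s → y s₁ ≤ y s := ge_of_hasDerivAt_pos_of_eq hy_s₁ le_rfl
    fun s hs hys => by linarith [hrate s hs hys.ge]
  set δ := -lam * s₁ * y s₁ - M
  have hδ : 0 < δ := by linarith
  have hgrow := add_mul_sub_le_of_le_hasDerivAt hy_s₁ fun s hs => hrate s hs (hstay s hs)
  have hs₂ : s₁ ≤ s₁ + (C - y s₁ + 1) / δ :=
    le_add_of_nonneg_right (div_nonneg (by linarith [hC s₁ hs₁]) hδ.le)
  have := hgrow _ hs₂
  rw [add_sub_cancel_left, mul_div_cancel₀ _ hδ.ne'] at this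
  linarith [hC _ (hs₁.trans hs₂)]

lemma exists_eventually_mul_le_of_hasDerivAt (hlam : lam ≠ 0)
    (hy : ∀ᶠ s in atTop, HasDerivAt y (-lam * s * y s + g s) s)
    (hg : g =O[atTop] fun _ => (1 : ℝ)) (hy_bdd : y =O[atTop] fun _ => (1 : ℝ)) :
    ∃ K, ∀ᶠ s in atTop, s * y s ≤ K := by
  obtain ⟨M, hM₀, hM⟩ := hg.exists_pos
  obtain ⟨C, hC₀, hC⟩ := hy_bdd.exists_pos
  obtain ⟨a, ha⟩ := eventually_atTop.1
    (hy.and (hM.bound.and (hC.bound.and (eventually_ge_atTop 1))))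
  have hg_le : ∀ s, a ≤ s → |g s| ≤ M := fun s hs => by simpa using (ha s hs).2.1
  have hy_le : ∀ s, a ≤ s → |y s| ≤ C := fun s hs => by simpa using (ha s hs).2.2.1
  have ha₁ : 1 ≤ a := (ha a le_rfl).2.2.2
  suffices ∃ K, ∀ s, a ≤ s → s * y s ≤ K from
    this.imp fun K hK => eventually_atTop.2 ⟨a, hK⟩
  rcases hlam.lt_or_gt with hneg | hpos
  · exact exists_mul_le_of_unstable hneg (by linarith) (fun s hs => (ha s hs).1)
      (fun s hs => (abs_le.1 (hg_le s hs)).1) (fun s hs => (abs_le.1 (hy_le s hs)).2) hM₀.le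
  · exact exists_mul_le_of_stable hpos ha₁ (fun s hs => (ha s hs).1)
      (fun s hs => (abs_le.1 (hg_le s hs)).2) (fun s hs => (abs_le.1 (hy_le s hs)).2) hC₀.le

theorem isBigO_one_div_of_hasDerivAt_eq_neg_mul_add (hlam : lam ≠ 0)
    (hy : ∀ᶠ s in atTop, HasDerivAt y (-lam * s * y s + g s) s)
    (hg : g =O[atTop] fun _ => (1 : ℝ)) (hy_bdd : y =O[atTop] fun _ => (1 : ℝ)) :
    y =O[atTop] fun s => 1 / s := by
  obtain ⟨K₁, hK₁⟩ := exists_eventually_mul_le_of_hasDerivAt hlam hy hg hy_bdd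
  obtain ⟨K₂, hK₂⟩ := exists_eventually_mul_le_of_hasDerivAt (y := -y) (g := -g) hlam
    (hy.mono fun s h => h.neg.congr_deriv (by simp only [Pi.neg_apply]; ring))
    hg.neg_left hy_bdd.neg_left
  refine IsBigO.of_bound (max K₁ K₂) ?_
  filter_upwards [hK₁, hK₂, eventually_gt_atTop 0] with s h₁ h₂ hs
  have hK : |s * y s| ≤ max K₁ K₂ := by
    simp only [Pi.neg_apply, mul_neg] at h₂
    exact abs_le.2 ⟨by linarith [le_max_right K₁ K₂], h₁.trans (le_max_left K₁ K₂)⟩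
  rwa [Real.norm_eq_abs, Real.norm_eq_abs, abs_of_pos (one_div_pos.2 hs), mul_one_div,
    le_div_iff₀ hs, ← abs_of_pos hs, ← abs_mul, mul_comm, abs_of_pos hs]

end LinearDecay

lemma hasDerivAt_const_div_mul_inv_pow {m : ℕ} (hm : m ≠ 0) (c : ℝ) {s : ℝ} (hs : 0 < s) :
    HasDerivAt (fun t => c / m * (t ^ m)⁻¹) (-(c / s ^ (m + 1))) s := by
  refine (((hasDerivAt_pow m s).inv (pow_ne_zero m hs.ne')).const_mul (c / m)).congr_deriv ?_
  obtain ⟨j, rfl⟩ := Nat.exists_eq_succ_of_ne_zero hm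
  simp only [Nat.succ_sub_one, Nat.cast_succ, Nat.succ_eq_add_one]
  field_simp
  ring

theorem exists_sub_isBigO_of_deriv_isBigO {g g' : ℝ → ℝ} {m : ℕ} (hm : m ≠ 0)
    (hg : ∀ᶠ s in atTop, HasDerivAt g (g' s) s)
    (hg' : g' =O[atTop] fun s => 1 / s ^ (m + 1)) :
    ∃ L, (fun s => g s - L) =O[atTop] fun s => 1 / s ^ m := by
  obtain ⟨c, hc₀, hc⟩ := hg'.exists_pos
  obtain ⟨a, ha⟩ := eventually_atTop.1 (hg.and (hc.bound.and (eventually_gt_atTop 0)))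
  obtain ⟨L, hL⟩ := exists_abs_sub_le_of_abs_deriv_le (fun s hs => (ha s hs).1)
    (fun s hs => hasDerivAt_const_div_mul_inv_pow hm c (ha s hs).2.2)
    (fun s hs => mul_nonneg (div_nonneg hc₀.le m.cast_nonneg)
      (inv_nonneg.2 (pow_nonneg (ha s hs).2.2.le m)))
    (fun s hs => by
      have := (ha s hs).2.1
      rwa [Real.norm_eq_abs, Real.norm_eq_abs, abs_of_pos (one_div_pos.2 (pow_pos (ha s hs).2.2 _)),
        mul_one_div, ← neg_neg (c / _)] at this)
  refine ⟨L, IsBigO.of_bound (c / m) (eventually_atTop.2 ⟨a, fun s hs => ?_⟩)⟩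
  rw [Real.norm_eq_abs, Real.norm_eq_abs, one_div,
    abs_of_pos (inv_pos.2 (pow_pos (ha s hs).2.2 _))]
  exact hL s hs

lemma isBigO_one_atTop_of_abs_le {f : ℝ → ℝ} {ℓ : ℝ} (h : ∃ C, ∀ s, ℓ ≤ s → |f s| ≤ C) :
    f =O[atTop] fun _ => (1 : ℝ) := by
  obtain ⟨C, hC⟩ := h
  exact IsBigO.of_bound C (eventually_atTop.2 ⟨ℓ, fun s hs => by simpa using hC s hs⟩)

lemma isBigO_one_mul {u v : ℝ → ℝ} (hu : u =O[atTop] fun _ => (1 : ℝ))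
    (hv : v =O[atTop] fun _ => (1 : ℝ)) : (fun s => u s * v s) =O[atTop] fun _ => (1 : ℝ) := by
  simpa using hu.mul hv

lemma isBigO_inv_atTop_one : (fun s : ℝ => s⁻¹) =O[atTop] fun _ => (1 : ℝ) :=
  tendsto_inv_atTop_zero.isBigO_one ℝ

theorem soliton_pair_asymptotics {lam n : ℝ} (hlam : lam ≠ 0) {ξ y γ : ℝ → ℝ}
    (hξ : ∀ᶠ s in atTop, HasDerivAt ξ ((-2 * (n - 1 + ξ s) * y s) / s) s)
    (hy : ∀ᶠ s in atTop,
      HasDerivAt y ((ξ s + (γ s - n + 1 - lam * s ^ 2) * y s + γ s) / s) s)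
    (hξ_bdd : ξ =O[atTop] fun _ => (1 : ℝ)) (hy_bdd : y =O[atTop] fun _ => (1 : ℝ))
    (hγ_bdd : (fun s => γ s / s) =O[atTop] fun _ => (1 : ℝ)) :
    (y =O[atTop] fun s => 1 / s) ∧ ∃ ξinf, (fun s => ξ s - ξinf) =O[atTop] fun s => 1 / s := by
  set g := fun s => (ξ s + (γ s - n + 1) * y s + γ s) / s
  have hg : g =O[atTop] fun _ => (1 : ℝ) :=
    (((isBigO_one_mul hξ_bdd isBigO_inv_atTop_one).add (isBigO_one_mul hγ_bdd hy_bdd)).add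
      ((isBigO_one_mul (isBigO_inv_atTop_one.const_mul_left (1 - n)) hy_bdd).add
        hγ_bdd)).congr_left fun s => by simp only [g]; ring
  have hy' : ∀ᶠ s in atTop, HasDerivAt y (-lam * s * y s + g s) s := by
    filter_upwards [hy, eventually_gt_atTop 0] with s h hs
    refine h.congr_deriv ?_
    simp only [g]
    field_simp
    ring
  have hy_decay := isBigO_one_div_of_hasDerivAt_eq_neg_mul_add hlam hy' hg hy_bdd
  have hξ' : (fun s => (-2 * (n - 1 + ξ s) * y s) / s) =O[atTop] fun s => 1 / s ^ (1 + 1) :=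
    (((((isBigO_const_one ℝ (n - 1) atTop).add hξ_bdd).const_mul_left (-2)).mul
      hy_decay).mul (isBigO_refl (fun s : ℝ => s⁻¹) atTop)).congr (fun s => by ring)
      fun s => by ring
  exact ⟨hy_decay, by simpa using exists_sub_isBigO_of_deriv_isBigO one_ne_zero hξ hξ'⟩

lemma isBigO_two_mul_add_sq {y : ℝ → ℝ} (hy : y =O[atTop] fun s => 1 / s) :
    (fun s => 2 * y s + y s ^ 2) =O[atTop] fun s => 1 / s :=
  have hy_bdd : y =O[atTop] fun _ => (1 : ℝ) := hy.trans (by simpa using isBigO_inv_atTop_one)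
  (hy.mul ((isBigO_const_one ℝ 2 atTop).add hy_bdd)).congr (fun s => by ring) fun s => by ring

theorem exists_sub_const_mul_isBigO {p₁ p₂ : ℝ} {γ y₁ y₂ : ℝ → ℝ}
    (hγ : ∀ᶠ s in atTop, HasDerivAt γ
      ((γ s + p₁ * (2 * y₁ s + y₁ s ^ 2) + p₂ * (2 * y₂ s + y₂ s ^ 2)) / s) s)
    (hy₁ : y₁ =O[atTop] fun s => 1 / s) (hy₂ : y₂ =O[atTop] fun s => 1 / s) :
    ∃ K, (fun s => γ s - K * s) =O[atTop] fun s => 1 / s := by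
  set P := fun s => p₁ * (2 * y₁ s + y₁ s ^ 2) + p₂ * (2 * y₂ s + y₂ s ^ 2)
  have hP : P =O[atTop] fun s => 1 / s :=
    ((isBigO_two_mul_add_sq hy₁).const_mul_left p₁).add
      ((isBigO_two_mul_add_sq hy₂).const_mul_left p₂)
  have hslope : ∀ᶠ s in atTop, HasDerivAt (fun t => γ t / t) (P s / s ^ 2) s := by
    filter_upwards [hγ, eventually_gt_atTop 0] with s h hs
    refine (h.div (hasDerivAt_id s) hs.ne').congr_deriv ?_
    simp only [P, id]
    field_simp
    ring
  obtain ⟨K, hK⟩ := exists_sub_isBigO_of_deriv_isBigO two_ne_zero hslope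
    ((hP.mul (isBigO_refl (fun s : ℝ => (s ^ 2)⁻¹) atTop)).congr (fun s => by ring)
      fun s => by ring)
  refine ⟨K, ((isBigO_refl (fun s : ℝ => s) atTop).mul hK).congr' ?_ ?_⟩
  · filter_upwards [eventually_ne_atTop 0] with s hs
    field_simp
  · filter_upwards [eventually_ne_atTop 0] with s hs
    field_simp

theorem conical_end_asymptotics_general
    (p₁ p₂ : ℤ)
    (lam : ℝ) (hlam : lam = -1 ∨ lam = 1)
    (n : ℝ)
    (ℓ : ℝ)
    (ξ₁ ξ₂ y₁ y₂ γ : ℝ → ℝ)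
    (hξ₁ : ∀ s, ℓ ≤ s → HasDerivAt ξ₁ ((-2 * (n - 1 + ξ₁ s) * y₁ s) / s) s)
    (hξ₂ : ∀ s, ℓ ≤ s → HasDerivAt ξ₂ ((-2 * (n - 1 + ξ₂ s) * y₂ s) / s) s)
    (hy₁ : ∀ s, ℓ ≤ s →
      HasDerivAt y₁ ((ξ₁ s + (γ s - n + 1 - lam * s ^ 2) * y₁ s + γ s) / s) s)
    (hy₂ : ∀ s, ℓ ≤ s →
      HasDerivAt y₂ ((ξ₂ s + (γ s - n + 1 - lam * s ^ 2) * y₂ s + γ s) / s) s)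
    (hγ : ∀ s, ℓ ≤ s → HasDerivAt γ ((γ s + (p₁ : ℝ) * (2 * y₁ s + (y₁ s) ^ 2)
        + (p₂ : ℝ) * (2 * y₂ s + (y₂ s) ^ 2)) / s) s)
    (hbξ₁ : ∃ C, ∀ s, ℓ ≤ s → |ξ₁ s| ≤ C)
    (hbξ₂ : ∃ C, ∀ s, ℓ ≤ s → |ξ₂ s| ≤ C)
    (hby₁ : ∃ C, ∀ s, ℓ ≤ s → |y₁ s| ≤ C)
    (hby₂ : ∃ C, ∀ s, ℓ ≤ s → |y₂ s| ≤ C)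
    (hbγ : ∃ C, ∀ s, ℓ ≤ s → |γ s / s| ≤ C) :
    ∃ ξ₁inf ξ₂inf Kinf : ℝ,
      ((fun s => ξ₁ s - ξ₁inf) =O[atTop] fun s => 1 / s) ∧
      ((fun s => ξ₂ s - ξ₂inf) =O[atTop] fun s => 1 / s) ∧
      (y₁ =O[atTop] fun s => 1 / s) ∧
      (y₂ =O[atTop] fun s => 1 / s) ∧
      ((fun s => γ s - Kinf * s) =O[atTop] fun s => 1 / s) := by
  have hlam₀ : lam ≠ 0 := by rcases hlam with rfl | rfl <;> norm_num
  have heventually {P : ℝ → Prop} (h : ∀ s, ℓ ≤ s → P s) : ∀ᶠ s in atTop, P s :=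
    eventually_atTop.2 ⟨ℓ, h⟩
  have hγ_bdd := isBigO_one_atTop_of_abs_le hbγ
  obtain ⟨hy₁_decay, ξ₁inf, hξ₁_lim⟩ := soliton_pair_asymptotics hlam₀ (heventually hξ₁)
    (heventually hy₁) (isBigO_one_atTop_of_abs_le hbξ₁) (isBigO_one_atTop_of_abs_le hby₁) hγ_bdd
  obtain ⟨hy₂_decay, ξ₂inf, hξ₂_lim⟩ := soliton_pair_asymptotics hlam₀ (heventually hξ₂)
    (heventually hy₂) (isBigO_one_atTop_of_abs_le hbξ₂) (isBigO_one_atTop_of_abs_le hby₂) hγ_bdd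
  obtain ⟨Kinf, hγ_lim⟩ := exists_sub_const_mul_isBigO (heventually hγ) hy₁_decay hy₂_decay
  exact ⟨ξ₁inf, ξ₂inf, Kinf, hξ₁_lim, hξ₂_lim, hy₁_decay, hy₂_decay, hγ_lim⟩

/-- A solution of the soliton system (in the radial coordinate `s`
and the variables `ξ_α = x_α − (n−1)`, `γ = Γ + n`) that is bounded in the sense
`sup|ξ_α| < ∞`, `sup|y_α| < ∞`, `sup|γ/s| < ∞` on `[ℓ,∞)` has the asymptotics
`ξ_α = ξ_{α,∞} + O(1/s)`, `y_α = O(1/s)`, `γ = K_∞ s + O(1/s)` as `s → ∞`. -/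
theorem conical_end_asymptotics
    (p₁ p₂ : ℤ) (hp₁ : 2 ≤ p₁) (hp₂ : 2 ≤ p₂)
    (lam : ℝ) (hlam : lam = -1 ∨ lam = 1)
    (n : ℝ) (hn : n = (p₁ : ℝ) + (p₂ : ℝ))
    (ℓ : ℝ) (hℓ : 0 < ℓ)
    (ξ₁ ξ₂ y₁ y₂ γ : ℝ → ℝ)
    (hξ₁ : ∀ s, ℓ ≤ s → HasDerivAt ξ₁ ((-2 * (n - 1 + ξ₁ s) * y₁ s) / s) s)
    (hξ₂ : ∀ s, ℓ ≤ s → HasDerivAt ξ₂ ((-2 * (n - 1 + ξ₂ s) * y₂ s) / s) s)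
    (hy₁ : ∀ s, ℓ ≤ s →
      HasDerivAt y₁ ((ξ₁ s + (γ s - n + 1 - lam * s ^ 2) * y₁ s + γ s) / s) s)
    (hy₂ : ∀ s, ℓ ≤ s →
      HasDerivAt y₂ ((ξ₂ s + (γ s - n + 1 - lam * s ^ 2) * y₂ s + γ s) / s) s)
    (hγ : ∀ s, ℓ ≤ s → HasDerivAt γ ((γ s + (p₁ : ℝ) * (2 * y₁ s + (y₁ s) ^ 2)
        + (p₂ : ℝ) * (2 * y₂ s + (y₂ s) ^ 2)) / s) s)
    (hbξ₁ : ∃ C, ∀ s, ℓ ≤ s → |ξ₁ s| ≤ C)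
    (hbξ₂ : ∃ C, ∀ s, ℓ ≤ s → |ξ₂ s| ≤ C)
    (hby₁ : ∃ C, ∀ s, ℓ ≤ s → |y₁ s| ≤ C)
    (hby₂ : ∃ C, ∀ s, ℓ ≤ s → |y₂ s| ≤ C)
    (hbγ : ∃ C, ∀ s, ℓ ≤ s → |γ s / s| ≤ C) :
    ∃ ξ₁inf ξ₂inf Kinf : ℝ,
      ((fun s => ξ₁ s - ξ₁inf) =O[atTop] fun s => 1 / s) ∧
      ((fun s => ξ₂ s - ξ₂inf) =O[atTop] fun s => 1 / s) ∧
      (y₁ =O[atTop] fun s => 1 / s) ∧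
      (y₂ =O[atTop] fun s => 1 / s) ∧
      ((fun s => γ s - Kinf * s) =O[atTop] fun s => 1 / s) :=
  conical_end_asymptotics_general p₁ p₂ lam hlam n ℓ ξ₁ ξ₂ y₁ y₂ γ hξ₁ hξ₂ hy₁ hy₂ hγ hbξ₁ hbξ₂ hby₁
    hby₂ hbγ
end

section
/- Let n ≥ 2 be an integer decomposed as n = p₁ + p₂ with p₁, p₂ ≥ 2, and let ℓ ≥ 1 and M ≥ 0. Let δξ₁, δξ₂, δy₁, δy₂, δγ : [ℓ, ∞) → ℝ be continuous with |δξ_α(s)| ≤ M, |δy_α(s)| ≤ M s^{−1/2}, and |δγ(s)| ≤ M s for all s ≥ ℓ and α = 1, 2. Then for every s ≥ ℓ and each α: (i) |2(n−1) ∫_ℓ^s δy_α(ς) dς/ς| ≤ 4(n−1)M/√ℓ; (ii) √s · |∫_ℓ^s e^{(ς²−s²)/2} (δξ_α(ς) − (n−1)δy_α(ς) + δγ(ς)) dς/ς| ≤ 2(n+1)M/√ℓ; (iii) √s · |∫_s^∞ e^{(s²−ς²)/2} (δξ_α(ς) − (n−1)δy_α(ς) + δγ(ς)) dς/ς| ≤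 (n+1)M/√ℓ; (iv) (1/s)·|2s ∫_ℓ^s (p₁ δy₁(ς) + p₂ δy₂(ς)) dς/ς²| ≤ (4n/3) M ℓ^{−3/2}. In particular, each of these linear integral operators has norm at most 4n/√ℓ with respect to the weighted sup norms ‖ξ‖₀ = sup|ξ|, ‖y‖_{1/2} = sup √s|y(s)|, ‖γ‖_{−1} = sup |γ(s)|/s. -/
/-!
Every operator is estimated by dominating its integrand pointwise and integrating the majorant
explicitly. For `ς ≥ ℓ ≥ 1` the weights give `|δξ - (n-1) δy + δγ| ≤ (n+1) M ς`, while `|δy| / ς`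
and `|δy| / ς²` are dominated by `M ς^(-3/2)` and `M ς^(-5/2)`, whose integrals over `[ℓ, ∞)` are
`2 M ℓ^(-1/2)` and `(2/3) M ℓ^(-3/2)`. For the Gaussian kernels, `(ς² - s²)/2 ≤ s (ς - s)/2` when
`ς ≤ s` and `(s² - ς²)/2 ≤ s (s - ς)` when `ς ≥ s`, so after the factor `ς` cancels they integrate
to at most `2/s` and `1/s`; finally `√s · C / s = C / √s ≤ C / √ℓ`.
-/

open MeasureTheory Set Real

lemma abs_setIntegral_le_of_subset {α : Type*} [MeasurableSpace α] {μ : Measure α}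
    {s t : Set α} {f g : α → ℝ} (hst : s ⊆ t) (hs : MeasurableSet s) (ht : MeasurableSet t)
    (hg : IntegrableOn g t μ) (hg₀ : ∀ x ∈ t, 0 ≤ g x) (hfg : ∀ x ∈ s, |f x| ≤ g x) :
    |∫ x in s, f x ∂μ| ≤ ∫ x in t, g x ∂μ :=
  calc |∫ x in s, f x ∂μ| ≤ ∫ x in s, g x ∂μ :=
        norm_integral_le_of_norm_le (f := f) (hg.mono_set hst) (ae_restrict_of_forall_mem hs hfg)
    _ ≤ ∫ x in t, g x ∂μ :=
        setIntegral_mono_set hg (ae_restrict_of_forall_mem ht hg₀) hst.eventuallyLE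

lemma abs_integral_Icc_le_of_abs_le_rpow {a b C q : ℝ} {f : ℝ → ℝ} (ha : 0 < a) (hC : 0 ≤ C)
    (hq : q < -1) (hf : ∀ t ∈ Icc a b, |f t| ≤ C * t ^ q) :
    |∫ t in Icc a b, f t| ≤ -(C * a ^ (q + 1) / (q + 1)) := by
  have hg : IntegrableOn (fun t ↦ C * t ^ q) (Ici a) := by
    rw [integrableOn_Ici_iff_integrableOn_Ioi]
    exact (integrableOn_Ioi_rpow_of_lt hq ha).const_mul C
  calc |∫ t in Icc a b, f t| ≤ ∫ t in Ici a, C * t ^ q :=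
        abs_setIntegral_le_of_subset Icc_subset_Ici_self measurableSet_Icc measurableSet_Ici hg
          (fun t ht ↦ mul_nonneg hC (rpow_nonneg (ha.trans_le ht).le q)) hf
    _ = -(C * a ^ (q + 1) / (q + 1)) := by
        rw [integral_const_mul, integral_Ici_eq_integral_Ioi, integral_Ioi_rpow_of_lt hq ha]
        ring

lemma integral_Iic_exp_mul_sub {a : ℝ} (ha : 0 < a) (c : ℝ) :
    ∫ x in Iic c, exp (a * (x - c)) = a⁻¹ := by
  have hsplit : (fun x ↦ exp (a * (x - c))) = fun x ↦ exp (-(a * c)) * exp (a * x) := by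
    ext x; rw [← exp_add]; ring_nf
  rw [hsplit, integral_const_mul, integral_exp_mul_Iic ha, mul_div_assoc', ← exp_add,
    neg_add_cancel, exp_zero, one_div]

lemma integral_Ici_exp_mul_sub {a : ℝ} (ha : 0 < a) (c : ℝ) :
    ∫ x in Ici c, exp (a * (c - x)) = a⁻¹ := by
  have hsplit : (fun x ↦ exp (a * (c - x))) = fun x ↦ exp (a * c) * exp (-a * x) := by
    ext x; rw [← exp_add]; ring_nf
  rw [integral_Ici_eq_integral_Ioi, hsplit, integral_const_mul,
    integral_exp_mul_Ioi (neg_neg_of_pos ha), neg_mul, neg_div_neg_eq, mul_div_assoc',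
    ← exp_add, add_neg_cancel, exp_zero, one_div]

lemma abs_div_pow_le_of_abs_le_rpow {a t C q : ℝ} (ht : 0 < t) (k : ℕ)
    (ha : |a| ≤ C * t ^ q) : |a / t ^ k| ≤ C * t ^ (q - k) := by
  rw [abs_div, abs_of_pos (pow_pos ht k), rpow_sub ht, rpow_natCast, ← mul_div_assoc]
  exact div_le_div_of_nonneg_right ha (pow_pos ht k).le

lemma abs_mul_div_le_of_abs_le_mul {k K a C t : ℝ} (ht : 0 < t) (hk : |k| ≤ K)
    (ha : |a| ≤ C * t) : |k * a / t| ≤ K * C := by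
  rw [abs_div, abs_mul, abs_of_pos ht, div_le_iff₀ ht, mul_assoc]
  exact mul_le_mul hk ha (abs_nonneg a) ((abs_nonneg k).trans hk)

lemma sqrt_mul_div_le_div_sqrt {ℓ s c : ℝ} (hℓ : 0 < ℓ) (hs : ℓ ≤ s) (hc : 0 ≤ c) :
    √s * (c / s) ≤ c / √ℓ := by
  rw [mul_div_left_comm, sqrt_div_self', mul_one_div]
  gcongr

lemma abs_sub_mul_add_le {ξ y γ n M t : ℝ} (ht : 1 ≤ t) (hn : 1 ≤ n) (hξ : |ξ| ≤ M)
    (hy : |y| ≤ M * t ^ (-(1 : ℝ) / 2)) (hγ : |γ| ≤ M * t) :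
    |ξ - (n - 1) * y + γ| ≤ (n + 1) * M * t := by
  have hM : 0 ≤ M := (abs_nonneg ξ).trans hξ
  have hy' : |y| ≤ M * t :=
    hy.trans (by gcongr; exact (rpow_le_one_of_one_le_of_nonpos ht (by norm_num)).trans ht)
  calc |ξ - (n - 1) * y + γ| ≤ |ξ| + (n - 1) * |y| + |γ| := by
        have hsub := abs_sub ξ ((n - 1) * y)
        rw [abs_mul, abs_of_nonneg (sub_nonneg.2 hn)] at hsub
        linarith [abs_add_le (ξ - (n - 1) * y) γ]
    _ ≤ M * t + (n - 1) * (M * t) + M * t := by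
        gcongr
        exact hξ.trans (le_mul_of_one_le_right hM ht)
    _ = (n + 1) * M * t := by ring

lemma abs_mul_add_mul_le {p₁ p₂ y₁ y₂ B : ℝ} (hp₁ : 0 ≤ p₁) (hp₂ : 0 ≤ p₂) (hy₁ : |y₁| ≤ B)
    (hy₂ : |y₂| ≤ B) : |p₁ * y₁ + p₂ * y₂| ≤ (p₁ + p₂) * B :=
  calc |p₁ * y₁ + p₂ * y₂| ≤ p₁ * |y₁| + p₂ * |y₂| := by
        simpa only [abs_mul, abs_of_nonneg hp₁, abs_of_nonneg hp₂] using abs_add_le (p₁ * y₁) (p₂ * y₂)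
    _ ≤ (p₁ + p₂) * B := by rw [add_mul]; gcongr

lemma abs_two_mul_integral_Icc_div_le {ℓ s N M : ℝ} {y : ℝ → ℝ} (hℓ : 0 < ℓ) (hN : 0 ≤ N)
    (hM : 0 ≤ M) (hy : ∀ t, ℓ ≤ t → |y t| ≤ M * t ^ (-(1 : ℝ) / 2)) :
    |2 * N * ∫ t in Icc ℓ s, y t / t| ≤ 4 * N * M / √ℓ := by
  have hint := abs_integral_Icc_le_of_abs_le_rpow (b := s) hℓ hM (q := -(1 : ℝ) / 2 - 1)
    (by norm_num) fun t ht ↦ by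
      simpa using abs_div_pow_le_of_abs_le_rpow (hℓ.trans_le ht.1) 1 (hy t ht.1)
  have hconst : -(M * ℓ ^ (-(1 : ℝ) / 2 - 1 + 1) / (-(1 : ℝ) / 2 - 1 + 1)) = 2 * M / √ℓ := by
    rw [sqrt_eq_rpow, div_eq_mul_inv _ (ℓ ^ _), ← rpow_neg hℓ.le]
    norm_num
    ring
  rw [abs_mul, abs_of_nonneg (by positivity)]
  calc 2 * N * |∫ t in Icc ℓ s, y t / t| ≤ 2 * N * (2 * M / √ℓ) := by gcongr; exact hconst ▸ hint
    _ = 4 * N * M / √ℓ := by ring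

lemma sqrt_mul_abs_integral_Icc_exp_sq_sub_le {ℓ s C : ℝ} {h : ℝ → ℝ} (hℓ : 0 < ℓ) (hs : ℓ ≤ s)
    (hC : 0 ≤ C) (hh : ∀ t, ℓ ≤ t → |h t| ≤ C * t) :
    √s * |∫ t in Icc ℓ s, exp ((t ^ 2 - s ^ 2) / 2) * h t / t| ≤ 2 * C / √ℓ := by
  have hs₀ : 0 < s := hℓ.trans_le hs
  have hkernel : ∀ t ∈ Icc ℓ s, |exp ((t ^ 2 - s ^ 2) / 2)| ≤ exp (s / 2 * (t - s)) :=
    fun t ht ↦ by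
      rw [abs_of_pos (exp_pos _), exp_le_exp]
      nlinarith [ht.1, ht.2]
  have hg : IntegrableOn (fun t ↦ exp (s / 2 * (t - s)) * C) (Iic s) :=
    (Integrable.of_integral_ne_zero <| by
      rw [integral_Iic_exp_mul_sub (by positivity)]; positivity).mul_const C
  have hint : |∫ t in Icc ℓ s, exp ((t ^ 2 - s ^ 2) / 2) * h t / t| ≤ 2 * C / s := by
    calc _ ≤ ∫ t in Iic s, exp (s / 2 * (t - s)) * C :=
          abs_setIntegral_le_of_subset Icc_subset_Iic_self measurableSet_Icc measurableSet_Iic hg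
            (fun t _ ↦ by positivity) fun t ht ↦
              abs_mul_div_le_of_abs_le_mul (hℓ.trans_le ht.1) (hkernel t ht) (hh t ht.1)
      _ = 2 * C / s := by
          rw [integral_mul_const, integral_Iic_exp_mul_sub (by positivity)]
          field_simp
  calc √s * |∫ t in Icc ℓ s, exp ((t ^ 2 - s ^ 2) / 2) * h t / t| ≤ √s * (2 * C / s) := by
        gcongr
    _ ≤ 2 * C / √ℓ := sqrt_mul_div_le_div_sqrt hℓ hs (by positivity)

lemma sqrt_mul_abs_integral_Ici_exp_sq_sub_le {ℓ s C : ℝ} {h : ℝ → ℝ} (hℓ : 0 < ℓ) (hs : ℓ ≤ s)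
    (hC : 0 ≤ C) (hh : ∀ t, ℓ ≤ t → |h t| ≤ C * t) :
    √s * |∫ t in Ici s, exp ((s ^ 2 - t ^ 2) / 2) * h t / t| ≤ C / √ℓ := by
  have hs₀ : 0 < s := hℓ.trans_le hs
  have hkernel : ∀ t ∈ Ici s, |exp ((s ^ 2 - t ^ 2) / 2)| ≤ exp (s * (s - t)) :=
    fun t ht ↦ by
      rw [abs_of_pos (exp_pos _), exp_le_exp]
      nlinarith [sq_nonneg (t - s)]
  have hg : IntegrableOn (fun t ↦ exp (s * (s - t)) * C) (Ici s) :=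
    (Integrable.of_integral_ne_zero <| by
      rw [integral_Ici_exp_mul_sub hs₀]; positivity).mul_const C
  have hint : |∫ t in Ici s, exp ((s ^ 2 - t ^ 2) / 2) * h t / t| ≤ C / s := by
    calc _ ≤ ∫ t in Ici s, exp (s * (s - t)) * C :=
          abs_setIntegral_le_of_subset subset_rfl measurableSet_Ici measurableSet_Ici hg
            (fun t _ ↦ by positivity) fun t ht ↦
              abs_mul_div_le_of_abs_le_mul (hs₀.trans_le ht) (hkernel t ht) (hh t (hs.trans ht))
      _ = C / s := by rw [integral_mul_const, integral_Ici_exp_mul_sub hs₀, inv_mul_eq_div]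
  calc √s * |∫ t in Ici s, exp ((s ^ 2 - t ^ 2) / 2) * h t / t| ≤ √s * (C / s) := by gcongr
    _ ≤ C / √ℓ := sqrt_mul_div_le_div_sqrt hℓ hs hC

lemma inv_mul_abs_two_mul_integral_Icc_div_sq_le {ℓ s M : ℝ} {y : ℝ → ℝ} (hℓ : 0 < ℓ)
    (hs : ℓ ≤ s) (hM : 0 ≤ M) (hy : ∀ t, ℓ ≤ t → |y t| ≤ M * t ^ (-(1 : ℝ) / 2)) :
    1 / s * |2 * s * ∫ t in Icc ℓ s, y t / t ^ 2| ≤ 4 / 3 * M / (ℓ * √ℓ) := by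
  have hint := abs_integral_Icc_le_of_abs_le_rpow (b := s) hℓ hM (q := -(1 : ℝ) / 2 - 2)
    (by norm_num) fun t ht ↦ by
      simpa using abs_div_pow_le_of_abs_le_rpow (hℓ.trans_le ht.1) 2 (hy t ht.1)
  have hconst : -(M * ℓ ^ (-(1 : ℝ) / 2 - 2 + 1) / (-(1 : ℝ) / 2 - 2 + 1))
      = 2 / 3 * M / (ℓ * √ℓ) := by
    rw [sqrt_eq_rpow, ← rpow_one_add' hℓ.le (by norm_num), div_eq_mul_inv _ (ℓ ^ _),
      ← rpow_neg hℓ.le]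
    norm_num
    ring
  have hs₀ : 0 < s := hℓ.trans_le hs
  calc 1 / s * |2 * s * ∫ t in Icc ℓ s, y t / t ^ 2| = 2 * |∫ t in Icc ℓ s, y t / t ^ 2| := by
        rw [abs_mul, abs_of_pos (by positivity)]
        field_simp
    _ ≤ 2 * (2 / 3 * M / (ℓ * √ℓ)) := by gcongr; exact hconst ▸ hint
    _ = 4 / 3 * M / (ℓ * √ℓ) := by ring

theorem frechet_derivative_operator_bounds_general
    (p₁ p₂ : ℤ) (hp₁ : 2 ≤ p₁) (hp₂ : 2 ≤ p₂)
    (n : ℤ) (hn : n = p₁ + p₂) (hn2 : 2 ≤ n)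
    (ℓ M : ℝ) (hℓ : 1 ≤ ℓ) (hM : 0 ≤ M)
    (δξ₁ δξ₂ δy₁ δy₂ δγ : ℝ → ℝ)
    (hbξ₁ : ∀ s, ℓ ≤ s → |δξ₁ s| ≤ M) (hbξ₂ : ∀ s, ℓ ≤ s → |δξ₂ s| ≤ M)
    (hby₁ : ∀ s, ℓ ≤ s → |δy₁ s| ≤ M * s ^ (-(1:ℝ)/2))
    (hby₂ : ∀ s, ℓ ≤ s → |δy₂ s| ≤ M * s ^ (-(1:ℝ)/2))
    (hbγ : ∀ s, ℓ ≤ s → |δγ s| ≤ M * s) :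
    (∀ s, ℓ ≤ s →
      (|2 * ((n : ℝ) - 1) * ∫ ς in Set.Icc ℓ s, δy₁ ς / ς| ≤ 4 * ((n : ℝ) - 1) * M / Real.sqrt ℓ ∧
       |2 * ((n : ℝ) - 1) * ∫ ς in Set.Icc ℓ s, δy₂ ς / ς| ≤ 4 * ((n : ℝ) - 1) * M / Real.sqrt ℓ) ∧
      (Real.sqrt s * |∫ ς in Set.Icc ℓ s,
          Real.exp ((ς ^ 2 - s ^ 2) / 2) * (δξ₁ ς - ((n : ℝ) - 1) * δy₁ ς + δγ ς) / ς|
        ≤ 2 * ((n : ℝ) + 1) * M / Real.sqrt ℓ ∧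
       Real.sqrt s * |∫ ς in Set.Icc ℓ s,
          Real.exp ((ς ^ 2 - s ^ 2) / 2) * (δξ₂ ς - ((n : ℝ) - 1) * δy₂ ς + δγ ς) / ς|
        ≤ 2 * ((n : ℝ) + 1) * M / Real.sqrt ℓ) ∧
      (Real.sqrt s * |∫ ς in Set.Ici s,
          Real.exp ((s ^ 2 - ς ^ 2) / 2) * (δξ₁ ς - ((n : ℝ) - 1) * δy₁ ς + δγ ς) / ς|
        ≤ ((n : ℝ) + 1) * M / Real.sqrt ℓ ∧
       Real.sqrt s * |∫ ς in Set.Ici s,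
          Real.exp ((s ^ 2 - ς ^ 2) / 2) * (δξ₂ ς - ((n : ℝ) - 1) * δy₂ ς + δγ ς) / ς|
        ≤ ((n : ℝ) + 1) * M / Real.sqrt ℓ) ∧
      ((1 / s) * |2 * s * ∫ ς in Set.Icc ℓ s, ((p₁ : ℝ) * δy₁ ς + (p₂ : ℝ) * δy₂ ς) / ς ^ 2|
        ≤ (4 * (n : ℝ) / 3) * M / (ℓ * Real.sqrt ℓ))) ∧
    (4 * ((n : ℝ) - 1) * M / Real.sqrt ℓ ≤ 4 * (n : ℝ) * M / Real.sqrt ℓ ∧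
     2 * ((n : ℝ) + 1) * M / Real.sqrt ℓ ≤ 4 * (n : ℝ) * M / Real.sqrt ℓ ∧
     ((n : ℝ) + 1) * M / Real.sqrt ℓ ≤ 4 * (n : ℝ) * M / Real.sqrt ℓ ∧
     (4 * (n : ℝ) / 3) * M / (ℓ * Real.sqrt ℓ) ≤ 4 * (n : ℝ) * M / Real.sqrt ℓ) := by
  have hℓ₀ : (0 : ℝ) < ℓ := one_pos.trans_le hℓ
  have hn₁ : (1 : ℝ) ≤ n := by exact_mod_cast one_le_two.trans hn2
  have hsource : ∀ {δξ δy : ℝ → ℝ}, (∀ t, ℓ ≤ t → |δξ t| ≤ M) →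
      (∀ t, ℓ ≤ t → |δy t| ≤ M * t ^ (-(1 : ℝ) / 2)) →
      ∀ t, ℓ ≤ t → |δξ t - ((n : ℝ) - 1) * δy t + δγ t| ≤ ((n : ℝ) + 1) * M * t :=
    fun hbξ hby t ht ↦
      abs_sub_mul_add_le (hℓ.trans ht) hn₁ (hbξ t ht) (hby t ht) (hbγ t ht)
  have hpy : ∀ t, ℓ ≤ t → |(p₁ : ℝ) * δy₁ t + (p₂ : ℝ) * δy₂ t| ≤ n * M * t ^ (-(1 : ℝ) / 2) :=
    fun t ht ↦ by
      have := abs_mul_add_mul_le (p₁ := p₁) (p₂ := p₂) (by exact_mod_cast zero_le_two.trans hp₁)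
        (by exact_mod_cast zero_le_two.trans hp₂) (hby₁ t ht) (hby₂ t ht)
      rwa [← Int.cast_add, ← hn, ← mul_assoc] at this
  have hC : 0 ≤ ((n : ℝ) + 1) * M := by positivity
  refine ⟨fun s hs ↦ ⟨⟨?_, ?_⟩, ⟨?_, ?_⟩, ⟨?_, ?_⟩, ?_⟩, ?_, ?_, ?_, ?_⟩
  · exact abs_two_mul_integral_Icc_div_le hℓ₀ (by linarith) hM hby₁
  · exact abs_two_mul_integral_Icc_div_le hℓ₀ (by linarith) hM hby₂
  · exact (sqrt_mul_abs_integral_Icc_exp_sq_sub_le hℓ₀ hs hC (hsource hbξ₁ hby₁)).trans_eq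
      (by ring)
  · exact (sqrt_mul_abs_integral_Icc_exp_sq_sub_le hℓ₀ hs hC (hsource hbξ₂ hby₂)).trans_eq
      (by ring)
  · exact sqrt_mul_abs_integral_Ici_exp_sq_sub_le hℓ₀ hs hC (hsource hbξ₁ hby₁)
  · exact sqrt_mul_abs_integral_Ici_exp_sq_sub_le hℓ₀ hs hC (hsource hbξ₂ hby₂)
  · exact (inv_mul_abs_two_mul_integral_Icc_div_sq_le hℓ₀ hs (by positivity) hpy).trans_eq
      (by ring)
  · gcongr; linarith
  · gcongr ?_ * M / _; linarith
  · gcongr ?_ * M / _; linarith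
  · gcongr
    · linarith
    · exact le_mul_of_one_le_left (sqrt_nonneg ℓ) hℓ

/-- Estimates for the components of the Fréchet derivative of the
conical-end fixed-point maps: if `|δξ_α| ≤ M`, `|δy_α| ≤ M s^{-1/2}`, `|δγ| ≤ M s`
on `[ℓ,∞)` with `ℓ ≥ 1`, then the four integral operators satisfy the stated bounds;
in particular all of them are bounded by `4nM/√ℓ` in the appropriate weighted norms. -/
theorem frechet_derivative_operator_bounds
    (p₁ p₂ : ℤ) (hp₁ : 2 ≤ p₁) (hp₂ : 2 ≤ p₂)
    (n : ℤ) (hn : n = p₁ + p₂) (hn2 : 2 ≤ n)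
    (ℓ M : ℝ) (hℓ : 1 ≤ ℓ) (hM : 0 ≤ M)
    (δξ₁ δξ₂ δy₁ δy₂ δγ : ℝ → ℝ)
    (hcξ₁ : ContinuousOn δξ₁ (Set.Ici ℓ)) (hcξ₂ : ContinuousOn δξ₂ (Set.Ici ℓ))
    (hcy₁ : ContinuousOn δy₁ (Set.Ici ℓ)) (hcy₂ : ContinuousOn δy₂ (Set.Ici ℓ))
    (hcγ : ContinuousOn δγ (Set.Ici ℓ))
    (hbξ₁ : ∀ s, ℓ ≤ s → |δξ₁ s| ≤ M) (hbξ₂ : ∀ s, ℓ ≤ s → |δξ₂ s| ≤ M)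
    (hby₁ : ∀ s, ℓ ≤ s → |δy₁ s| ≤ M * s ^ (-(1:ℝ)/2))
    (hby₂ : ∀ s, ℓ ≤ s → |δy₂ s| ≤ M * s ^ (-(1:ℝ)/2))
    (hbγ : ∀ s, ℓ ≤ s → |δγ s| ≤ M * s) :
    (∀ s, ℓ ≤ s →
      (|2 * ((n : ℝ) - 1) * ∫ ς in Set.Icc ℓ s, δy₁ ς / ς| ≤ 4 * ((n : ℝ) - 1) * M / Real.sqrt ℓ ∧
       |2 * ((n : ℝ) - 1) * ∫ ς in Set.Icc ℓ s, δy₂ ς / ς| ≤ 4 * ((n : ℝ) - 1) * M / Real.sqrt ℓ) ∧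
      (Real.sqrt s * |∫ ς in Set.Icc ℓ s,
          Real.exp ((ς ^ 2 - s ^ 2) / 2) * (δξ₁ ς - ((n : ℝ) - 1) * δy₁ ς + δγ ς) / ς|
        ≤ 2 * ((n : ℝ) + 1) * M / Real.sqrt ℓ ∧
       Real.sqrt s * |∫ ς in Set.Icc ℓ s,
          Real.exp ((ς ^ 2 - s ^ 2) / 2) * (δξ₂ ς - ((n : ℝ) - 1) * δy₂ ς + δγ ς) / ς|
        ≤ 2 * ((n : ℝ) + 1) * M / Real.sqrt ℓ) ∧
      (Real.sqrt s * |∫ ς in Set.Ici s,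
          Real.exp ((s ^ 2 - ς ^ 2) / 2) * (δξ₁ ς - ((n : ℝ) - 1) * δy₁ ς + δγ ς) / ς|
        ≤ ((n : ℝ) + 1) * M / Real.sqrt ℓ ∧
       Real.sqrt s * |∫ ς in Set.Ici s,
          Real.exp ((s ^ 2 - ς ^ 2) / 2) * (δξ₂ ς - ((n : ℝ) - 1) * δy₂ ς + δγ ς) / ς|
        ≤ ((n : ℝ) + 1) * M / Real.sqrt ℓ) ∧
      ((1 / s) * |2 * s * ∫ ς in Set.Icc ℓ s, ((p₁ : ℝ) * δy₁ ς + (p₂ : ℝ) * δy₂ ς) / ς ^ 2|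
        ≤ (4 * (n : ℝ) / 3) * M / (ℓ * Real.sqrt ℓ))) ∧
    (4 * ((n : ℝ) - 1) * M / Real.sqrt ℓ ≤ 4 * (n : ℝ) * M / Real.sqrt ℓ ∧
     2 * ((n : ℝ) + 1) * M / Real.sqrt ℓ ≤ 4 * (n : ℝ) * M / Real.sqrt ℓ ∧
     ((n : ℝ) + 1) * M / Real.sqrt ℓ ≤ 4 * (n : ℝ) * M / Real.sqrt ℓ ∧
     (4 * (n : ℝ) / 3) * M / (ℓ * Real.sqrt ℓ) ≤ 4 * (n : ℝ) * M / Real.sqrt ℓ) :=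
  frechet_derivative_operator_bounds_general p₁ p₂ hp₁ hp₂ n hn hn2 ℓ M hℓ hM δξ₁ δξ₂ δy₁ δy₂ δγ
    hbξ₁ hbξ₂ hby₁ hby₂ hbγ
end

section
/- Let λ ∈ {−1, +1} and let f : [0, ∞) → ℝ be locally Lipschitz with f(0) = 0 and |f(s) + λs| ≤ C for all s ≥ 0, for some constant C > 0. Then: (i) for every s ≥ 0 the solution θ ↦ S_θ(s) of dS_θ(s)/dθ = f(S_θ(s)) with S₀(s) = s exists for all θ ∈ ℝ and satisfies S_θ(s) ≥ 0; (ii) for every s ≥ 0 the limit ϱ₀(s) := lim_{λθ → −∞} e^{λθ} S_θ(s) exists, and |e^{λθ} S_θ(s) − ϱ₀(s)| ≤ C e^{λθ} for all s ≥ 0 and all θ ∈ ℝ; in particular the convergence is uniform in s ≥ 0; (iii) if s₀ ≥ 0 satisfies f(s₀) = 0, then S_θ([0, s₀]) ⊆ [0, s₀] for all θ ∈ ℝ and ϱ₀(s) = 0 for all s ∈ [0, s₀]. -/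
/-!
Extend `f` to all of `ℝ` keeping `f x + λ x` bounded by `C`. In the variable `y = e^{λθ} x` the
flow equation becomes `y' = e^{λθ} (f x + λ x)`, whose right-hand side is bounded by `C e^{λθ}`
on every bounded time interval; Picard–Lindelöf therefore gives solutions on `[-T, T]` for every
`T`, and by uniqueness these glue to a global flow. The same bound makes
`e^{λθ} S_θ(s) ± C e^{λθ}` monotone, which yields the limit `ϱ₀(s)` together with the error
estimate. Zeros of `f` are equilibria that trajectories cannot cross, which gives `S_θ ≥ 0` and the
invariance of `[0, s₀]`; there `S_θ` is bounded, so `e^{λθ} S_θ(s) → 0`.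
-/

open Set Filter Topology Real Metric

theorem LocallyLipschitzOn.comp_locallyLipschitz {α β γ : Type*} [PseudoEMetricSpace α]
    [PseudoEMetricSpace β] [PseudoEMetricSpace γ] {f : β → γ} {g : α → β} {t : Set β}
    (hf : LocallyLipschitzOn t f) (hg : LocallyLipschitz g) (hgt : ∀ x, g x ∈ t) :
    LocallyLipschitz (f ∘ g) := by
  intro x
  obtain ⟨Kg, u, hu, hgu⟩ := hg x
  obtain ⟨Kf, v, hv, hfv⟩ := hf (hgt x)
  have hgv : g ⁻¹' v ∈ 𝓝 x :=
    tendsto_nhdsWithin_iff.2 ⟨hg.continuous.continuousAt, .of_forall hgt⟩ hv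
  exact ⟨Kf * Kg, u ∩ g ⁻¹' v, inter_mem hu hgv,
    hfv.comp (hgu.mono inter_subset_left) ((mapsTo_preimage g v).mono_left inter_subset_right)⟩

section Uniqueness

variable {E : Type*} [NormedAddCommGroup E] [NormedSpace ℝ E] {g : E → E}

theorem LocallyLipschitz.ODE_solution_eqOn_Icc (hg : LocallyLipschitz g) {u v : ℝ → E}
    {a b t₀ : ℝ} (ht₀ : t₀ ∈ Ioo a b) (hu : ContinuousOn u (Icc a b))
    (hu' : ∀ t ∈ Ioo a b, HasDerivAt u (g (u t)) t) (hv : ContinuousOn v (Icc a b))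
    (hv' : ∀ t ∈ Ioo a b, HasDerivAt v (g (v t)) t) (heq : u t₀ = v t₀) :
    EqOn u v (Icc a b) := by
  obtain ⟨K, hK⟩ := hg.locallyLipschitzOn.exists_lipschitzOnWith_of_compact
    ((isCompact_Icc.image_of_continuousOn hu).union (isCompact_Icc.image_of_continuousOn hv))
  exact ODE_solution_unique_of_mem_Icc (fun _ _ ↦ hK) ht₀ hu hu'
    (fun t ht ↦ .inl (mem_image_of_mem u (Ioo_subset_Icc_self ht))) hv hv'
    (fun t ht ↦ .inr (mem_image_of_mem v (Ioo_subset_Icc_self ht))) heq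

theorem LocallyLipschitz.ODE_solution_unique (hg : LocallyLipschitz g) {u v : ℝ → E}
    (hu : ∀ t, HasDerivAt u (g (u t)) t) (hv : ∀ t, HasDerivAt v (g (v t)) t) {t₀ : ℝ}
    (heq : u t₀ = v t₀) : u = v := by
  funext t
  refine hg.ODE_solution_eqOn_Icc (a := min t t₀ - 1) (b := max t t₀ + 1) ?_
    (HasDerivAt.continuousOn fun t _ ↦ hu t) (fun t _ ↦ hu t)
    (HasDerivAt.continuousOn fun t _ ↦ hv t) (fun t _ ↦ hv t) heq ?_
  · constructor <;> linarith [min_le_right t t₀, le_max_right t t₀]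
  · constructor <;> linarith [min_le_left t t₀, le_max_left t t₀]

theorem LocallyLipschitz.ODE_solution_eq_const (hg : LocallyLipschitz g) {u : ℝ → E}
    (hu : ∀ t, HasDerivAt u (g (u t)) t) {c : E} (hc : g c = 0) {t₀ : ℝ} (h₀ : u t₀ = c) :
    u = fun _ ↦ c :=
  hg.ODE_solution_unique hu (fun t ↦ by simpa [hc] using hasDerivAt_const t c) h₀

end Uniqueness

section Equilibrium

variable {g u : ℝ → ℝ} {c : ℝ}

theorem LocallyLipschitz.le_ODE_solution (hg : LocallyLipschitz g)
    (hu : ∀ t, HasDerivAt u (g (u t)) t) (hc : g c = 0) {t₀ : ℝ} (h₀ : c ≤ u t₀) (t : ℝ) :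
    c ≤ u t := by
  by_contra! ht
  obtain ⟨t₁, -, ht₁⟩ := intermediate_value_uIcc
    (HasDerivAt.continuousOn fun t _ ↦ hu t)
    (mem_uIcc_of_ge ht.le h₀)
  have := congrFun (hg.ODE_solution_eq_const hu hc ht₁) t
  linarith

theorem LocallyLipschitz.ODE_solution_le (hg : LocallyLipschitz g)
    (hu : ∀ t, HasDerivAt u (g (u t)) t) (hc : g c = 0) {t₀ : ℝ} (h₀ : u t₀ ≤ c) (t : ℝ) :
    u t ≤ c := by
  by_contra! ht
  obtain ⟨t₁, -, ht₁⟩ := intermediate_value_uIcc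
    (HasDerivAt.continuousOn fun t _ ↦ hu t)
    (mem_uIcc_of_le h₀ ht.le)
  have := congrFun (hg.ODE_solution_eq_const hu hc ht₁) t
  linarith

end Equilibrium

/-- The vector field satisfied by `y t = exp (lam * t) • x t` when `x' = g x`. -/
noncomputable def rescaledField {E : Type*} [NormedAddCommGroup E] [NormedSpace ℝ E]
    (lam : ℝ) (g : E → E) (t : ℝ) (y : E) : E :=
  exp (lam * t) • g (exp (-lam * t) • y) + lam • y

section Existence

variable {E : Type*} [NormedAddCommGroup E] [NormedSpace ℝ E] {g : E → E} {lam C : ℝ}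

theorem exp_mul_exp_neg_mul (lam t : ℝ) : exp (lam * t) * exp (-lam * t) = 1 := by
  rw [← exp_add, ← add_mul, add_neg_cancel, zero_mul, exp_zero]

theorem rescaledField_eq (t : ℝ) (y : E) :
    rescaledField lam g t y =
      exp (lam * t) • (g (exp (-lam * t) • y) + lam • exp (-lam * t) • y) := by
  rw [rescaledField, smul_add, smul_comm _ lam, smul_smul (exp (lam * t)),
    exp_mul_exp_neg_mul, one_smul]

theorem norm_rescaledField_le (hgrow : ∀ x, ‖g x + lam • x‖ ≤ C) (t : ℝ) (y : E) :
    ‖rescaledField lam g t y‖ ≤ C * exp (lam * t) := by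
  rw [rescaledField_eq, norm_smul, norm_of_nonneg (exp_pos _).le, mul_comm C]
  exact mul_le_mul_of_nonneg_left (hgrow _) (exp_pos _).le

theorem lipschitzOnWith_rescaledField {K : NNReal} {s : Set E} {u : Set E}
    (hg : LipschitzOnWith K g s) {t : ℝ} (hu : MapsTo (exp (-lam * t) • ·) u s) :
    LipschitzOnWith (K + ‖lam‖₊) (rescaledField lam g t) u := by
  refine LipschitzOnWith.of_dist_le_mul fun y₁ h₁ y₂ h₂ ↦ ?_
  have hg₁₂ := hg.dist_le_mul _ (hu h₁) _ (hu h₂)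
  simp only [dist_eq_norm, ← smul_sub, norm_smul, norm_of_nonneg (exp_pos _).le] at hg₁₂ ⊢
  calc ‖rescaledField lam g t y₁ - rescaledField lam g t y₂‖
      = ‖exp (lam * t) • (g (exp (-lam * t) • y₁) - g (exp (-lam * t) • y₂))
          + lam • (y₁ - y₂)‖ := by simp only [rescaledField, smul_sub]; abel_nf
    _ ≤ exp (lam * t) * (K * (exp (-lam * t) * ‖y₁ - y₂‖)) + |lam| * ‖y₁ - y₂‖ := by
      refine (norm_add_le _ _).trans ?_
      rw [norm_smul, norm_smul, Real.norm_eq_abs, Real.norm_eq_abs, abs_of_pos (exp_pos _)]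
      gcongr
    _ = ↑(K + ‖lam‖₊) * ‖y₁ - y₂‖ := by
      push_cast
      linear_combination (K * ‖y₁ - y₂‖) * exp_mul_exp_neg_mul lam t

variable [ProperSpace E]

theorem isPicardLindelof_rescaledField (hg : LocallyLipschitz g)
    (hgrow : ∀ x, ‖g x + lam • x‖ ≤ C) (x₀ : E) {T : ℝ} (hT : 0 ≤ T) :
    ∃ L a K, IsPicardLindelof (rescaledField lam g) (tmin := -T) (tmax := T)
      ⟨0, neg_nonpos.2 hT, hT⟩ x₀ a 0 L K := by
  have hC : 0 ≤ C := (norm_nonneg _).trans (hgrow 0)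
  let L : NNReal := ⟨C * exp (|lam| * T), by positivity⟩
  let a : NNReal := L * ⟨T, hT⟩
  let B : Set E := (fun p : ℝ × E ↦ exp (-lam * p.1) • p.2) '' Icc (-T) T ×ˢ closedBall x₀ a
  obtain ⟨K, hK⟩ := hg.locallyLipschitzOn.exists_lipschitzOnWith_of_compact
    ((isCompact_Icc.prod (isCompact_closedBall x₀ a)).image (by fun_prop) : IsCompact B)
  refine ⟨L, a, K + ‖lam‖₊, fun t ht ↦ lipschitzOnWith_rescaledField hK
    fun y hy ↦ ⟨(t, y), ⟨ht, hy⟩, rfl⟩, fun y _ ↦ ?_, fun t ht y _ ↦ ?_, ?_⟩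
  · have := hg.continuous
    unfold rescaledField
    fun_prop
  · refine (norm_rescaledField_le hgrow t y).trans ?_
    have : lam * t ≤ |lam| * T := (le_abs_self _).trans <| (abs_mul lam t).trans_le <|
      mul_le_mul_of_nonneg_left (abs_le.2 ht) (abs_nonneg _)
    exact mul_le_mul_of_nonneg_left (exp_le_exp.2 this) hC
  · simp only [sub_zero, zero_sub, neg_neg, max_self, NNReal.coe_zero]
    exact (NNReal.coe_mul L ⟨T, hT⟩).ge

theorem exists_hasDerivWithinAt_Icc_of_norm_add_smul_le (hg : LocallyLipschitz g)
    (hgrow : ∀ x, ‖g x + lam • x‖ ≤ C) (x₀ : E) {T : ℝ} (hT : 0 ≤ T) :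
    ∃ x : ℝ → E, x 0 = x₀ ∧
      ∀ t ∈ Icc (-T) T, HasDerivWithinAt x (g (x t)) (Icc (-T) T) t := by
  obtain ⟨L, a, K, hF⟩ := isPicardLindelof_rescaledField hg hgrow x₀ hT
  obtain ⟨y, hy0, hy⟩ := hF.exists_eq_forall_mem_Icc_hasDerivWithinAt₀
  refine ⟨fun t ↦ exp (-lam * t) • y t, by simp [hy0], fun t ht ↦ ?_⟩
  refine ((((hasDerivAt_id' t).const_mul (-lam)).exp.hasDerivWithinAt).smul
    (hy t ht)).congr_deriv ?_
  simp only [rescaledField_eq, smul_smul, mul_comm (exp (-lam * t)), exp_mul_exp_neg_mul,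
    one_smul]
  module

theorem exists_forall_hasDerivAt_of_norm_add_smul_le (hg : LocallyLipschitz g)
    (hgrow : ∀ x, ‖g x + lam • x‖ ≤ C) (x₀ : E) :
    ∃ x : ℝ → E, x 0 = x₀ ∧ ∀ t, HasDerivAt x (g (x t)) t := by
  choose xs hxs0 hxs using fun n : ℕ ↦
    exists_hasDerivWithinAt_Icc_of_norm_add_smul_le hg hgrow x₀ (by positivity : (0 : ℝ) ≤ n + 1)
  have hderiv : ∀ n : ℕ, ∀ t ∈ Ioo (-(n + 1 : ℝ)) (n + 1), HasDerivAt (xs n) (g (xs n t)) t :=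
    fun n t ht ↦ (hxs n t (Ioo_subset_Icc_self ht)).hasDerivAt (Icc_mem_nhds ht.1 ht.2)
  have hcompat : ∀ n m : ℕ, n ≤ m → EqOn (xs n) (xs m) (Icc (-(n + 1 : ℝ)) (n + 1)) := by
    intro n m hnm
    have hnm' : (n : ℝ) ≤ m := by exact_mod_cast hnm
    have hsub : Icc (-(n + 1 : ℝ)) (n + 1) ⊆ Icc (-(m + 1 : ℝ)) (m + 1) :=
      Icc_subset_Icc (by linarith) (by linarith)
    exact hg.ODE_solution_eqOn_Icc (t₀ := 0) ⟨by linarith, by linarith⟩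
      (HasDerivWithinAt.continuousOn (hxs n)) (hderiv n)
      ((HasDerivWithinAt.continuousOn (hxs m)).mono hsub)
      (fun t ht ↦ hderiv m t (Ioo_subset_Ioo (by linarith) (by linarith) ht))
      (by rw [hxs0, hxs0])
  have hmem : ∀ t : ℝ, t ∈ Ioo (-(⌈|t|⌉₊ + 1 : ℝ)) (⌈|t|⌉₊ + 1) := fun t ↦ by
    have := (abs_le.1 (Nat.le_ceil |t|))
    constructor <;> linarith
  refine ⟨fun t ↦ xs ⌈|t|⌉₊ t, by simp [hxs0], fun t ↦ ?_⟩
  refine (hderiv _ t (hmem t)).congr_of_eventuallyEq ?_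
  filter_upwards [isOpen_Ioo.mem_nhds (hmem t)] with t' ht'
  rcases le_total ⌈|t'|⌉₊ ⌈|t|⌉₊ with h | h
  · exact hcompat _ _ h (Ioo_subset_Icc_self (hmem t'))
  · exact (hcompat _ _ h (Ioo_subset_Icc_self ht')).symm

end Existence

theorem exists_tendsto_atBot_of_abs_deriv_le_exp {φ φ' : ℝ → ℝ} {C : ℝ}
    (hφ : ∀ τ, HasDerivAt φ (φ' τ) τ) (hb : ∀ τ, |φ' τ| ≤ C * exp τ) :
    ∃ l, Tendsto φ atBot (𝓝 l) ∧ ∀ τ, |φ τ - l| ≤ C * exp τ := by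
  have hexp : ∀ τ, HasDerivAt (fun τ ↦ C * exp τ) (C * exp τ) τ :=
    fun τ ↦ (hasDerivAt_exp τ).const_mul C
  have hup : Monotone fun τ ↦ φ τ + C * exp τ :=
    monotone_of_hasDerivAt_nonneg (fun τ ↦ (hφ τ).add (hexp τ))
      fun τ ↦ by simp only [Pi.zero_apply]; linarith [(abs_le.1 (hb τ)).1]
  have hdown : Antitone fun τ ↦ φ τ - C * exp τ :=
    antitone_of_hasDerivAt_nonpos (fun τ ↦ (hφ τ).sub (hexp τ))
      fun τ ↦ by simp only [Pi.zero_apply]; linarith [(abs_le.1 (hb τ)).2]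
  have hC : 0 ≤ C := by simpa using (abs_nonneg _).trans (hb 0)
  have hbdd : BddBelow (range fun τ ↦ φ τ + C * exp τ) := by
    refine ⟨φ 0 - C * exp 0, forall_mem_range.2 fun τ ↦ ?_⟩
    rcases le_total τ 0 with hτ | hτ
    · linarith [hdown hτ, mul_nonneg hC (exp_pos τ).le]
    · linarith [hup hτ, mul_nonneg hC (exp_pos 0).le]
  have hlim := tendsto_atBot_ciInf hup hbdd
  have hexp0 : Tendsto (fun τ ↦ C * exp τ) atBot (𝓝 0) := by
    simpa using tendsto_exp_atBot.const_mul C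
  have hφlim : Tendsto φ atBot (𝓝 (⨅ τ, φ τ + C * exp τ)) := by
    simpa using hlim.sub hexp0
  refine ⟨_, hφlim, fun τ ↦ abs_sub_le_iff.2 ⟨?_, ?_⟩⟩
  · linarith [hdown.ge_of_tendsto (by simpa using hφlim.sub hexp0) τ]
  · linarith [hup.le_of_tendsto hlim τ]

theorem exists_tendsto_comap_of_abs_deriv_le_exp {lam C : ℝ} (hlam : |lam| = 1)
    {h h' : ℝ → ℝ} (hh : ∀ θ, HasDerivAt h (h' θ) θ) (hb : ∀ θ, |h' θ| ≤ C * exp (lam * θ)) :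
    ∃ l, Tendsto h (comap (lam * ·) atBot) (𝓝 l) ∧ ∀ θ, |h θ - l| ≤ C * exp (lam * θ) := by
  have hinv : ∀ θ, lam * (lam * θ) = θ := fun θ ↦ by
    rw [← mul_assoc, ← abs_mul_abs_self, hlam, one_mul, one_mul]
  obtain ⟨l, hlim, hbound⟩ := exists_tendsto_atBot_of_abs_deriv_le_exp
    (φ := fun τ ↦ h (lam * τ)) (φ' := fun τ ↦ h' (lam * τ) * lam)
    (fun τ ↦ (hh (lam * τ)).comp τ (by simpa using (hasDerivAt_id τ).const_mul lam))
    (fun τ ↦ by simpa [abs_mul, hlam, hinv] using hb (lam * τ))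
  have hcomp : h = (fun τ ↦ h (lam * τ)) ∘ (lam * ·) := funext fun θ ↦ by simp [hinv]
  refine ⟨l, hcomp ▸ hlim.comp tendsto_comap, fun θ ↦ by simpa [hinv] using hbound (lam * θ)⟩

theorem exists_tendsto_exp_mul_ODE_solution {g u : ℝ → ℝ} {lam C : ℝ} (hlam : |lam| = 1)
    (hgrow : ∀ x, |g x + lam * x| ≤ C) (hu : ∀ θ, HasDerivAt u (g (u θ)) θ) :
    ∃ l, Tendsto (fun θ ↦ exp (lam * θ) * u θ) (comap (lam * ·) atBot) (𝓝 l) ∧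
      ∀ θ, |exp (lam * θ) * u θ - l| ≤ C * exp (lam * θ) := by
  refine exists_tendsto_comap_of_abs_deriv_le_exp hlam
    (h' := fun θ ↦ exp (lam * θ) * (g (u θ) + lam * u θ)) (fun θ ↦ ?_) fun θ ↦ ?_
  · exact (((hasDerivAt_id' θ).const_mul lam).exp.mul (hu θ)).congr_deriv (by ring)
  · rw [abs_mul, abs_of_pos (exp_pos _), mul_comm C]
    exact mul_le_mul_of_nonneg_left (hgrow _) (exp_pos _).le

theorem tendsto_exp_mul_comap_atBot_zero {lam M : ℝ} {u : ℝ → ℝ} (hu : ∀ θ, |u θ| ≤ M) :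
    Tendsto (fun θ ↦ exp (lam * θ) * u θ) (comap (lam * ·) atBot) (𝓝 0) :=
  (tendsto_exp_atBot.comp tendsto_comap).zero_mul_isBoundedUnder_le
    (isBoundedUnder_of ⟨M, fun θ ↦ by simpa using hu θ⟩)

/-- Extends `f` from `[0, ∞)` to `ℝ` so that `f x + lam * x` is constant on `(-∞, 0]`. -/
noncomputable def extendIci (lam : ℝ) (f : ℝ → ℝ) (x : ℝ) : ℝ :=
  f (max x 0) + lam * max x 0 - lam * x

section extendIci

variable {lam : ℝ} {f : ℝ → ℝ}

theorem extendIci_of_nonneg {x : ℝ} (hx : 0 ≤ x) : extendIci lam f x = f x := by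
  simp [extendIci, max_eq_left hx]

theorem extendIci_add_mul (x : ℝ) :
    extendIci lam f x + lam * x = f (max x 0) + lam * max x 0 := by
  rw [extendIci]; ring

theorem locallyLipschitz_extendIci (hf : LocallyLipschitzOn (Ici 0) f) :
    LocallyLipschitz (extendIci lam f) := by
  have hmax : LocallyLipschitz fun x : ℝ ↦ max x 0 := LocallyLipschitz.id.max_const 0
  have hlin : LocallyLipschitz fun x : ℝ ↦ lam * x :=
    (contDiff_const.mul contDiff_id : ContDiff ℝ 1 fun x : ℝ ↦ lam * x).locallyLipschitz
  exact ((hf.comp_locallyLipschitz hmax fun x ↦ le_max_right x 0).add (hlin.comp hmax)).sub hlin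

end extendIci

theorem soliton_vector_field_flow_rescaled_limit_general
    (lam : ℝ) (hlam : lam = -1 ∨ lam = 1)
    (f : ℝ → ℝ)
    (hf : ∀ s, 0 ≤ s → ∃ K : NNReal, ∃ t ∈ nhdsWithin s (Set.Ici (0 : ℝ)),
      LipschitzOnWith K f t)
    (hf0 : f 0 = 0)
    (C : ℝ) (hgrow : ∀ s, 0 ≤ s → |f s + lam * s| ≤ C) :
    ∃ S : ℝ → ℝ → ℝ, ∃ ρ₀ : ℝ → ℝ,
      (∀ s, 0 ≤ s → S 0 s = s) ∧
      (∀ s, 0 ≤ s → ∀ θ : ℝ, HasDerivAt (fun θ' => S θ' s) (f (S θ s)) θ) ∧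
      (∀ s, 0 ≤ s → ∀ θ : ℝ, 0 ≤ S θ s) ∧
      (∀ s, 0 ≤ s → Filter.Tendsto (fun θ => Real.exp (lam * θ) * S θ s)
        (Filter.comap (fun θ => lam * θ) Filter.atBot) (nhds (ρ₀ s))) ∧
      (∀ s, 0 ≤ s → ∀ θ : ℝ,
        |Real.exp (lam * θ) * S θ s - ρ₀ s| ≤ C * Real.exp (lam * θ)) ∧
      (∀ s₀, 0 ≤ s₀ → f s₀ = 0 →
        (∀ θ : ℝ, ∀ s ∈ Set.Icc (0 : ℝ) s₀, S θ s ∈ Set.Icc (0 : ℝ) s₀) ∧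
        (∀ s ∈ Set.Icc (0 : ℝ) s₀, ρ₀ s = 0)) := by
  have hlam₁ : |lam| = 1 := by rcases hlam with rfl | rfl <;> norm_num
  have hg : LocallyLipschitz (extendIci lam f) := locallyLipschitz_extendIci hf
  have hggrow : ∀ x, |extendIci lam f x + lam * x| ≤ C := fun x ↦ by
    simpa [extendIci_add_mul] using hgrow _ (le_max_right x 0)
  choose S hS₀ hS using fun s : ℝ ↦
    exists_forall_hasDerivAt_of_norm_add_smul_le hg (fun x ↦ by simpa using hggrow x) s
  have hS_nonneg : ∀ s, 0 ≤ s → ∀ θ, 0 ≤ S s θ := fun s hs ↦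
    hg.le_ODE_solution (hS s) (by rw [extendIci_of_nonneg le_rfl, hf0]) (hS₀ s ▸ hs)
  have hS_le : ∀ s₀, 0 ≤ s₀ → f s₀ = 0 → ∀ s ≤ s₀, ∀ θ, S s θ ≤ s₀ := fun s₀ hs₀ hfs₀ s hs ↦
    hg.ODE_solution_le (hS s) (by rw [extendIci_of_nonneg hs₀, hfs₀]) ((hS₀ s).trans_le hs)
  choose ρ hρ using fun s ↦ exists_tendsto_exp_mul_ODE_solution hlam₁ hggrow (hS s)
  refine ⟨fun θ s ↦ S s θ, ρ, fun s _ ↦ hS₀ s, fun s hs θ ↦ ?_, hS_nonneg,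
    fun s _ ↦ (hρ s).1, fun s _ ↦ (hρ s).2, fun s₀ hs₀ hfs₀ ↦ ⟨fun θ s hs ↦
    ⟨hS_nonneg s hs.1 θ, hS_le s₀ hs₀ hfs₀ s hs.2 θ⟩, fun s hs ↦ ?_⟩⟩
  · simpa only [extendIci_of_nonneg (hS_nonneg s hs θ)] using hS s θ
  · have : (comap (lam * ·) atBot).NeBot :=
      atBot_neBot.comap_of_surj (mul_left_surjective₀ (by simp [← abs_ne_zero, hlam₁]))
    exact tendsto_nhds_unique (hρ s).1 (tendsto_exp_mul_comap_atBot_zero fun θ ↦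
      (abs_of_nonneg (hS_nonneg s hs.1 θ)).trans_le (hS_le s₀ hs₀ hfs₀ s hs.2 θ))

/-- Let `λ ∈ {−1,+1}` and let `f : [0,∞) → ℝ` be locally Lipschitz
with `f(0) = 0` and `|f(s) + λs| ≤ C` for all `s ≥ 0`.  Then the flow `S_θ` of `f`
on `[0,∞)` exists for all `θ ∈ ℝ`; the limit `ϱ₀(s) = lim_{λθ→−∞} e^{λθ} S_θ(s)`
exists with `|e^{λθ}S_θ(s) − ϱ₀(s)| ≤ C e^{λθ}` (uniform convergence); and if
`f(s₀) = 0` with `s₀ ≥ 0` then `[0,s₀]` is flow-invariant and `ϱ₀ ≡ 0` on `[0,s₀]`. -/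
theorem soliton_vector_field_flow_rescaled_limit
    (lam : ℝ) (hlam : lam = -1 ∨ lam = 1)
    (f : ℝ → ℝ)
    (hf : ∀ s, 0 ≤ s → ∃ K : NNReal, ∃ t ∈ nhdsWithin s (Set.Ici (0 : ℝ)),
      LipschitzOnWith K f t)
    (hf0 : f 0 = 0)
    (C : ℝ) (hC : 0 < C) (hgrow : ∀ s, 0 ≤ s → |f s + lam * s| ≤ C) :
    ∃ S : ℝ → ℝ → ℝ, ∃ ρ₀ : ℝ → ℝ,
      (∀ s, 0 ≤ s → S 0 s = s) ∧
      (∀ s, 0 ≤ s → ∀ θ : ℝ, HasDerivAt (fun θ' => S θ' s) (f (S θ s)) θ) ∧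
      (∀ s, 0 ≤ s → ∀ θ : ℝ, 0 ≤ S θ s) ∧
      (∀ s, 0 ≤ s → Filter.Tendsto (fun θ => Real.exp (lam * θ) * S θ s)
        (Filter.comap (fun θ => lam * θ) Filter.atBot) (nhds (ρ₀ s))) ∧
      (∀ s, 0 ≤ s → ∀ θ : ℝ,
        |Real.exp (lam * θ) * S θ s - ρ₀ s| ≤ C * Real.exp (lam * θ)) ∧
      (∀ s₀, 0 ≤ s₀ → f s₀ = 0 →
        (∀ θ : ℝ, ∀ s ∈ Set.Icc (0 : ℝ) s₀, S θ s ∈ Set.Icc (0 : ℝ) s₀) ∧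
        (∀ s ∈ Set.Icc (0 : ℝ) s₀, ρ₀ s = 0)) :=
  soliton_vector_field_flow_rescaled_limit_general lam hlam f hf hf0 C hgrow
end

section
/- Let λ ∈ {−1, +1} and let n ≥ 2 be a real number. There exist s₀ > 0 and a differentiable function Z : [s₀, ∞) → ℝ satisfying the Riccati equation (1/s)·dZ/ds = 2(n−1)/s⁴ − (n+1)Z/s² − λZ − Z² for all s ≥ s₀, together with the two-sided bound (2λ(n−1) − 1)/s⁴ ≤ Z(s) ≤ (2λ(n−1) + 1)/s⁴ for all s ≥ s₀. In particular Z(s) = (2λ(n−1) + O(1))·s^{−4} as s → ∞. -/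
/-!
With `G(s) = exp(λs²/2) s^(n-3)`, the integrating factor `μ = s⁴ G` turns the Riccati equation
for `Z = F / s⁴` into `(μ Z)' = s G (2(n-1) - F² / s⁴)`. Since `λ G' = s G + λ(n-3) G / s`, the
right-hand side is `2λ(n-1) G'` minus a source term of size at most `s G / 4` for `s ≥ 4n`, while
`s G ≤ 2 λ G'` there. Hence `μ Z = 2λ(n-1) G - R`, where `R` is the primitive of the source
vanishing at `4n` if `λ = 1`, and at `+∞` if `λ = -1` (then `G` decreases to `0`); in both cases
`|R| ≤ G / 2`. Clamping `F` to `[2λ(n-1)-1, 2λ(n-1)+1]` inside the source makes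
`F ↦ 2λ(n-1) - R / G` a `1/2`-contraction of bounded continuous functions. Its fixed point stays
within `1/2` of `2λ(n-1)`, so the clamp is inactive and `Z = F / s⁴` solves the equation.
-/

open Filter Asymptotics Set MeasureTheory Topology Real
open scoped BoundedContinuousFunction

theorem abs_intervalIntegral_le_of_abs_le_deriv {f G G' : ℝ → ℝ} {a b K : ℝ} (hab : a ≤ b)
    (hG : ∀ x ∈ Icc a b, HasDerivAt G (G' x) x) (hG' : IntervalIntegrable G' volume a b)
    (hf : ∀ x ∈ Icc a b, |f x| ≤ K * G' x) :
    |∫ x in a..b, f x| ≤ K * (G b - G a) :=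
  calc |∫ x in a..b, f x| = ‖∫ x in a..b, f x‖ := (norm_eq_abs _).symm
    _ ≤ ∫ x in a..b, K * G' x := intervalIntegral.norm_integral_le_of_norm_le hab
        (ae_of_all _ fun x hx => hf x (Ioc_subset_Icc_self hx)) (hG'.const_mul K)
    _ = K * (G b - G a) := by
      rw [intervalIntegral.integral_const_mul,
        intervalIntegral.integral_eq_sub_of_hasDerivAt (by rwa [uIcc_of_le hab]) hG']

theorem integrableOn_Ioi_of_abs_le_neg_deriv {f G G' : ℝ → ℝ} {a K l : ℝ}
    (hG : ∀ x ∈ Ici a, HasDerivAt G (G' x) x) (hG' : ∀ x ∈ Ioi a, G' x ≤ 0)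
    (hlim : Tendsto G atTop (𝓝 l)) (hfm : AEStronglyMeasurable f (volume.restrict (Ioi a)))
    (hf : ∀ x ∈ Ioi a, |f x| ≤ K * -G' x) : IntegrableOn f (Ioi a) :=
  ((integrableOn_Ioi_deriv_of_nonpos' hG hG' hlim).neg.const_mul K).mono' hfm
    ((ae_restrict_iff' measurableSet_Ioi).2 (ae_of_all _ hf))

theorem abs_integral_Ioi_le_of_abs_le_neg_deriv {f G G' : ℝ → ℝ} {a K : ℝ}
    (hG : ∀ x ∈ Ici a, HasDerivAt G (G' x) x) (hG' : ∀ x ∈ Ioi a, G' x ≤ 0)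
    (hlim : Tendsto G atTop (𝓝 0)) (hf : ∀ x ∈ Ioi a, |f x| ≤ K * -G' x) :
    |∫ x in Ioi a, f x| ≤ K * G a :=
  calc |∫ x in Ioi a, f x| = ‖∫ x in Ioi a, f x‖ := (norm_eq_abs _).symm
    _ ≤ ∫ x in Ioi a, K * -G' x := norm_integral_le_of_norm_le
        ((integrableOn_Ioi_deriv_of_nonpos' hG hG' hlim).neg.const_mul K)
        ((ae_restrict_iff' measurableSet_Ioi).2 (ae_of_all _ hf))
    _ = K * G a := by
      rw [integral_const_mul, integral_neg, integral_Ioi_of_hasDerivAt_of_nonpos' hG hG' hlim]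
      ring

theorem hasDerivAt_riccati_of_integratingFactor {μ Y : ℝ → ℝ} {lam n s : ℝ} (hs : s ≠ 0)
    (hμs : μ s ≠ 0) (hμ : HasDerivAt μ (μ s * (lam * s + (n + 1) / s)) s)
    (hY : HasDerivAt Y (s * μ s * (2 * (n - 1) / s ^ 4 - (Y s / μ s) ^ 2)) s) :
    HasDerivAt (fun t => Y t / μ t) (s * (2 * (n - 1) / s ^ 4 - (n + 1) * (Y s / μ s) / s ^ 2
      - lam * (Y s / μ s) - (Y s / μ s) ^ 2)) s :=
  (hY.div hμ hμs).congr_deriv (by field_simp; ring)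

theorem ContinuousOn.intervalIntegrable_of_Ioi_zero {f : ℝ → ℝ} (hf : ContinuousOn f (Ioi 0))
    {a b : ℝ} (ha : 0 < a) (hb : 0 < b) : IntervalIntegrable f volume a b :=
  (hf.mono fun _ hx => (lt_min ha hb).trans_le hx.1).intervalIntegrable

noncomputable section

namespace Riccati

def weight (lam n u : ℝ) : ℝ := exp (lam * u ^ 2 / 2) * u ^ (n - 3)

def weightDeriv (lam n u : ℝ) : ℝ := weight lam n u * (lam * u + (n - 3) / u)

variable {lam n : ℝ}

theorem weight_pos {u : ℝ} (hu : 0 < u) : 0 < weight lam n u := by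
  unfold weight; positivity

theorem hasDerivAt_weight {u : ℝ} (hu : 0 < u) :
    HasDerivAt (weight lam n) (weightDeriv lam n u) u := by
  have := (((hasDerivAt_pow 2 u).const_mul lam).div_const 2).exp.mul
    (hasDerivAt_rpow_const (p := n - 3) (Or.inl hu.ne'))
  refine this.congr_deriv ?_
  rw [weightDeriv, weight, rpow_sub_one hu.ne']
  field_simp
  ring

theorem hasDerivAt_pow_four_mul_weight {u : ℝ} (hu : 0 < u) :
    HasDerivAt (fun t => t ^ 4 * weight lam n t)
      (u ^ 4 * weight lam n u * (lam * u + (n + 1) / u)) u := by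
  refine ((hasDerivAt_pow 4 u).mul (hasDerivAt_weight hu)).congr_deriv ?_
  rw [weightDeriv]
  field_simp
  ring

theorem continuousOn_weight : ContinuousOn (weight lam n) (Ioi 0) := fun _ hu =>
  (hasDerivAt_weight hu).continuousAt.continuousWithinAt

theorem continuousOn_weightDeriv : ContinuousOn (weightDeriv lam n) (Ioi 0) :=
  continuousOn_weight.mul (continuousOn_const.mul continuousOn_id |>.add
    (continuousOn_const.div continuousOn_id fun _ hu => ne_of_gt hu))

theorem mul_weight_le_two_mul_weightDeriv (hlam : lam = -1 ∨ lam = 1) (hn : 2 ≤ n) {u : ℝ}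
    (hu : 4 * n ≤ u) : u * weight lam n u ≤ 2 * (lam * weightDeriv lam n u) := by
  have hu0 : 0 < u := by linarith
  have hG := weight_pos (lam := lam) (n := n) hu0
  have hdiv : -(u / 2) ≤ lam * ((n - 3) / u) := by
    refine neg_le_of_abs_le ?_
    have hlam_abs : |lam| = 1 := by rcases hlam with rfl | rfl <;> norm_num
    rw [abs_mul, hlam_abs, one_mul, abs_div, abs_of_pos hu0, div_le_div_iff₀ hu0 two_pos]
    nlinarith [abs_le.mpr (⟨by linarith, by linarith⟩ : -n ≤ n - 3 ∧ n - 3 ≤ n)]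
  have hlam2 : lam * lam = 1 := by rcases hlam with rfl | rfl <;> norm_num
  have hderiv : lam * weightDeriv lam n u = weight lam n u * (u + lam * ((n - 3) / u)) := by
    rw [weightDeriv]; linear_combination weight lam n u * u * hlam2
  rw [hderiv]
  nlinarith [mul_le_mul_of_nonneg_left hdiv hG.le]

theorem tendsto_weight_neg_one : Tendsto (weight (-1) n) atTop (𝓝 0) := by
  have := (rpow_mul_exp_neg_mul_sq_isLittleO_exp_neg one_half_pos (n - 3)).tendsto_zero_of_tendsto
    (tendsto_exp_atBot.comp (tendsto_id.const_mul_atTop_of_neg (by norm_num : -(1 / 2 : ℝ) < 0)))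
  refine this.congr fun u => ?_
  rw [weight, mul_comm]; ring_nf

theorem abs_le_two_mul_lam_mul_weightDeriv (hlam : lam = -1 ∨ lam = 1) (hn : 2 ≤ n)
    {f : ℝ → ℝ} {K u : ℝ} (hK : 0 ≤ K) (hu : 4 * n ≤ u) (hf : |f u| ≤ K * (u * weight lam n u)) :
    |f u| ≤ 2 * K * (lam * weightDeriv lam n u) := by
  nlinarith [mul_le_mul_of_nonneg_left (mul_weight_le_two_mul_weightDeriv hlam hn hu) hK]

theorem weightDeriv_neg_one_neg (hn : 2 ≤ n) {u : ℝ} (hu : 4 * n ≤ u) :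
    weightDeriv (-1) n u < 0 := by
  have := mul_weight_le_two_mul_weightDeriv (Or.inl rfl) hn hu
  have hpos : 0 < u * weight (-1) n u := mul_pos (by linarith) (weight_pos (by linarith))
  linarith

def clamp (lam n t : ℝ) : ℝ :=
  projIcc (2 * lam * (n - 1) - 1) (2 * lam * (n - 1) + 1) (by linarith) t

theorem clamp_mem (t : ℝ) :
    clamp lam n t ∈ Icc (2 * lam * (n - 1) - 1) (2 * lam * (n - 1) + 1) :=
  (projIcc _ _ _ t).2

theorem abs_clamp_le (hlam : lam = -1 ∨ lam = 1) (hn : 1 ≤ n) (t : ℝ) :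
    |clamp lam n t| ≤ 2 * n - 1 := by
  obtain ⟨h₁, h₂⟩ := clamp_mem (lam := lam) (n := n) t
  rcases hlam with rfl | rfl <;> exact abs_le.mpr ⟨by linarith, by linarith⟩

theorem clamp_of_abs_sub_le {t : ℝ} (ht : |t - 2 * lam * (n - 1)| ≤ 1) : clamp lam n t = t := by
  obtain ⟨h₁, h₂⟩ := abs_le.mp ht
  rw [clamp, projIcc_of_mem _ ⟨by linarith, by linarith⟩]

theorem continuous_clamp : Continuous (clamp lam n) :=
  continuous_subtype_val.comp continuous_projIcc

/-- The Riccati equation for `Z = F / s⁴` reads `(s⁴ G Z)' = 2λ(n-1) G' - source` when `F`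
agrees with its clamped value. -/
def source (lam n : ℝ) (g : ℝ →ᵇ ℝ) (u : ℝ) : ℝ :=
  u * weight lam n u * (2 * lam * (n - 1) * (n - 3) / u ^ 2 + clamp lam n (g u) ^ 2 / u ^ 4)

theorem continuousOn_source (g : ℝ →ᵇ ℝ) : ContinuousOn (source lam n g) (Ioi 0) :=
  (continuousOn_id.mul continuousOn_weight).mul
    ((continuousOn_const.div (continuousOn_id.pow 2) fun _ hu => pow_ne_zero 2 (ne_of_gt hu)).add
      (((continuous_clamp.comp g.continuous).pow 2).continuousOn.div (continuousOn_id.pow 4)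
        fun _ hu => pow_ne_zero 4 (ne_of_gt hu)))

theorem abs_source_le (hlam : lam = -1 ∨ lam = 1) (hn : 2 ≤ n) (g : ℝ →ᵇ ℝ) {u : ℝ}
    (hu : 4 * n ≤ u) : |source lam n g u| ≤ 1 / 4 * (u * weight lam n u) := by
  have hu0 : 0 < u := by linarith
  have hc := abs_clamp_le (n := n) hlam (by linarith) (g u)
  have hlam_abs : |lam| = 1 := by rcases hlam with rfl | rfl <;> norm_num
  have h₁ : |2 * lam * (n - 1) * (n - 3) / u ^ 2| ≤ 1 / 8 := by
    rw [abs_div, abs_mul, abs_mul, abs_mul, hlam_abs, abs_of_pos (by positivity : (0:ℝ) < u ^ 2),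
      div_le_iff₀ (by positivity), abs_of_pos (by norm_num : (0:ℝ) < 2),
      abs_of_nonneg (by linarith : 0 ≤ n - 1)]
    nlinarith [abs_le.mpr (⟨by linarith, by linarith⟩ : -n ≤ n - 3 ∧ n - 3 ≤ n), abs_nonneg (n - 3)]
  have h₂ : |clamp lam n (g u) ^ 2 / u ^ 4| ≤ 1 / 8 := by
    rw [abs_div, abs_pow, abs_of_pos (by positivity : (0:ℝ) < u ^ 4),
      div_le_iff₀ (by positivity)]
    have hu2 : (4 * n) ^ 2 ≤ u ^ 2 := pow_le_pow_left₀ (by linarith) hu 2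
    nlinarith [pow_le_pow_left₀ (abs_nonneg _) hc 2]
  rw [source, abs_mul, abs_of_pos (mul_pos hu0 (weight_pos hu0)), mul_comm (1 / 4)]
  exact mul_le_mul_of_nonneg_left ((abs_add_le _ _).trans (by linarith))
    (mul_pos hu0 (weight_pos hu0)).le

theorem abs_source_sub_source_le (hlam : lam = -1 ∨ lam = 1) (hn : 2 ≤ n) (g₁ g₂ : ℝ →ᵇ ℝ)
    {u : ℝ} (hu : 4 * n ≤ u) :
    |source lam n g₁ u - source lam n g₂ u| ≤ 1 / 4 * dist g₁ g₂ * (u * weight lam n u) := by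
  have hu0 : 0 < u := by linarith
  have hG := mul_pos hu0 (weight_pos (lam := lam) (n := n) hu0)
  set c₁ := clamp lam n (g₁ u)
  set c₂ := clamp lam n (g₂ u)
  have hc : |c₁ ^ 2 - c₂ ^ 2| ≤ (4 * n - 2) * dist g₁ g₂ := by
    rw [sq_sub_sq, abs_mul]
    refine mul_le_mul ((abs_add_le _ _).trans ?_) ((abs_projIcc_sub_projIcc _).trans
      (by rw [← Real.dist_eq]; exact BoundedContinuousFunction.dist_coe_le_dist u))
      (abs_nonneg _) (by linarith)
    linarith [abs_clamp_le (n := n) hlam (by linarith) (g₁ u),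
      abs_clamp_le (n := n) hlam (by linarith) (g₂ u)]
  have hu4 : 4 * (4 * n - 2) ≤ u ^ 4 := by
    nlinarith [pow_le_pow_left₀ (by linarith) hu 4, pow_le_pow_left₀ (by norm_num) hn 3]
  have hdiff : source lam n g₁ u - source lam n g₂ u
      = u * weight lam n u * ((c₁ ^ 2 - c₂ ^ 2) / u ^ 4) := by
    simp only [source, c₁, c₂]; ring
  rw [hdiff, abs_mul, abs_of_pos hG, abs_div, abs_of_pos (by positivity : (0:ℝ) < u ^ 4),
    mul_comm (1 / 4 * _)]
  refine mul_le_mul_of_nonneg_left ?_ hG.le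
  rw [div_le_iff₀ (by positivity)]
  nlinarith [dist_nonneg (x := g₁) (y := g₂)]

/-- The primitive of `f` that vanishes at `s₀` when `λ = 1` and at `+∞` otherwise; the second
choice selects the solution that stays bounded at infinity. -/
def anchoredPrimitive (lam s₀ : ℝ) (f : ℝ → ℝ) (s : ℝ) : ℝ :=
  (∫ u in s₀..s, f u) - if lam = 1 then 0 else ∫ u in Ioi s₀, f u

theorem hasDerivAt_anchoredPrimitive {s₀ s : ℝ} {f : ℝ → ℝ} (hf : ContinuousOn f (Ioi 0))
    (hs₀ : 0 < s₀) (hs : 0 < s) : HasDerivAt (anchoredPrimitive lam s₀ f) (f s) s :=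
  (intervalIntegral.integral_hasDerivAt_right (hf.intervalIntegrable_of_Ioi_zero hs₀ hs)
    (hf.stronglyMeasurableAtFilter isOpen_Ioi s hs)
    (hf.continuousAt (isOpen_Ioi.mem_nhds hs))).sub_const _

theorem anchoredPrimitive_sub {s₀ s : ℝ} {f₁ f₂ : ℝ → ℝ} (hs₀ : 0 < s₀) (hs : 0 < s)
    (hf₁ : ContinuousOn f₁ (Ioi 0)) (hf₂ : ContinuousOn f₂ (Ioi 0))
    (hint : lam ≠ 1 → IntegrableOn f₁ (Ioi s₀) ∧ IntegrableOn f₂ (Ioi s₀)) :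
    anchoredPrimitive lam s₀ (f₁ - f₂) s
      = anchoredPrimitive lam s₀ f₁ s - anchoredPrimitive lam s₀ f₂ s := by
  simp only [anchoredPrimitive, Pi.sub_apply]
  rw [intervalIntegral.integral_sub (hf₁.intervalIntegrable_of_Ioi_zero hs₀ hs)
    (hf₂.intervalIntegrable_of_Ioi_zero hs₀ hs)]
  split_ifs with h
  · ring
  · rw [integral_sub (hint h).1 (hint h).2]; ring

theorem anchoredPrimitive_of_ne_one {s₀ s : ℝ} {f : ℝ → ℝ} (h : lam ≠ 1)
    (hf : IntegrableOn f (Ioi s₀)) (hs : s₀ ≤ s) :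
    anchoredPrimitive lam s₀ f s = -∫ u in Ioi s, f u := by
  rw [anchoredPrimitive, if_neg h, ← intervalIntegral.integral_Ioi_sub_Ioi hf hs]
  ring

theorem integrableOn_Ioi_of_abs_le_mul_weight (hn : 2 ≤ n) {s₀ K : ℝ} {f : ℝ → ℝ}
    (hs₀ : 4 * n ≤ s₀) (hK : 0 ≤ K) (hf : ContinuousOn f (Ioi 0))
    (hfK : ∀ u, s₀ ≤ u → |f u| ≤ K * (u * weight (-1) n u)) : IntegrableOn f (Ioi s₀) := by
  refine integrableOn_Ioi_of_abs_le_neg_deriv (G := weight (-1) n) (K := 2 * K)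
    (fun x hx => hasDerivAt_weight (by linarith [hx.out]))
    (fun x hx => (weightDeriv_neg_one_neg hn (by linarith [hx.out])).le) tendsto_weight_neg_one
    ((hf.mono fun x hx => (show (0:ℝ) < s₀ by linarith).trans hx).aestronglyMeasurable
      measurableSet_Ioi) fun x hx => ?_
  have hx : s₀ ≤ x := le_of_lt hx
  simpa using abs_le_two_mul_lam_mul_weightDeriv (Or.inl rfl) hn hK (by linarith) (hfK x hx)

theorem abs_anchoredPrimitive_le (hlam : lam = -1 ∨ lam = 1) (hn : 2 ≤ n) {s₀ s K : ℝ}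
    {f : ℝ → ℝ} (hs₀ : 4 * n ≤ s₀) (hK : 0 ≤ K) (hf : ContinuousOn f (Ioi 0))
    (hfK : ∀ u, s₀ ≤ u → |f u| ≤ K * (u * weight lam n u)) (hs : s₀ ≤ s) :
    |anchoredPrimitive lam s₀ f s| ≤ 2 * K * weight lam n s := by
  have hdom : ∀ u, s₀ ≤ u → |f u| ≤ 2 * K * (lam * weightDeriv lam n u) := fun u hu =>
    abs_le_two_mul_lam_mul_weightDeriv hlam hn hK (by linarith) (hfK u hu)
  rcases hlam with rfl | rfl
  · rw [anchoredPrimitive_of_ne_one (by norm_num)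
      (integrableOn_Ioi_of_abs_le_mul_weight hn hs₀ hK hf hfK) hs, abs_neg]
    exact abs_integral_Ioi_le_of_abs_le_neg_deriv
      (fun x hx => hasDerivAt_weight (by linarith [hx.out]))
      (fun x hx => (weightDeriv_neg_one_neg hn (by linarith [hx.out])).le) tendsto_weight_neg_one
      fun x hx => by simpa using hdom x (by linarith [hx.out])
  · rw [anchoredPrimitive, if_pos rfl, sub_zero]
    calc |∫ u in s₀..s, f u| ≤ 2 * K * (weight 1 n s - weight 1 n s₀) :=
          abs_intervalIntegral_le_of_abs_le_deriv hs
            (fun x hx => hasDerivAt_weight (by linarith [hx.1]))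
            (continuousOn_weightDeriv.intervalIntegrable_of_Ioi_zero (by linarith) (by linarith))
            fun x hx => by simpa using hdom x hx.1
      _ ≤ 2 * K * weight 1 n s := by
          nlinarith [weight_pos (lam := 1) (n := n) (show 0 < s₀ by linarith)]

/-- `s⁴ Z` for the candidate solution `Z` built from `g`. -/
def profile (lam n s₀ : ℝ) (g : ℝ →ᵇ ℝ) (s : ℝ) : ℝ :=
  2 * lam * (n - 1) - anchoredPrimitive lam s₀ (source lam n g) s / weight lam n s

theorem continuousOn_profile {s₀ : ℝ} (hs₀ : 0 < s₀) (g : ℝ →ᵇ ℝ) :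
    ContinuousOn (profile lam n s₀ g) (Ioi 0) := by
  have hP : ContinuousOn (anchoredPrimitive lam s₀ (source lam n g)) (Ioi 0) := fun s hs =>
    (hasDerivAt_anchoredPrimitive (continuousOn_source g) hs₀ hs).continuousAt.continuousWithinAt
  exact continuousOn_const.sub (hP.div continuousOn_weight fun _ hs => (weight_pos hs).ne')

theorem abs_profile_sub_le (hlam : lam = -1 ∨ lam = 1) (hn : 2 ≤ n) {s₀ s : ℝ}
    (hs₀ : 4 * n ≤ s₀) (g : ℝ →ᵇ ℝ) (hs : s₀ ≤ s) :
    |profile lam n s₀ g s - 2 * lam * (n - 1)| ≤ 1 / 2 := by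
  have hG := weight_pos (lam := lam) (n := n) (show 0 < s by linarith)
  rw [profile, sub_sub_cancel_left, abs_neg, abs_div, abs_of_pos hG, div_le_iff₀ hG]
  linarith [abs_anchoredPrimitive_le hlam hn hs₀ (by norm_num) (continuousOn_source g)
    (fun u hu => abs_source_le hlam hn g (hs₀.trans hu)) hs]

theorem abs_profile_sub_profile_le (hlam : lam = -1 ∨ lam = 1) (hn : 2 ≤ n) {s₀ s : ℝ}
    (hs₀ : 4 * n ≤ s₀) (g₁ g₂ : ℝ →ᵇ ℝ) (hs : s₀ ≤ s) :
    |profile lam n s₀ g₁ s - profile lam n s₀ g₂ s| ≤ 1 / 2 * dist g₁ g₂ := by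
  have hs₀' : 0 < s₀ := by linarith
  have hG := weight_pos (lam := lam) (n := n) (show 0 < s by linarith)
  have hint (g : ℝ →ᵇ ℝ) : lam ≠ 1 → IntegrableOn (source lam n g) (Ioi s₀) := fun h => by
    obtain rfl : lam = -1 := hlam.resolve_right h
    exact integrableOn_Ioi_of_abs_le_mul_weight hn hs₀ (by norm_num) (continuousOn_source g)
      fun u hu => abs_source_le hlam hn g (hs₀.trans hu)
  have hsub := anchoredPrimitive_sub (lam := lam) hs₀' (hs₀'.trans_le hs) (continuousOn_source g₁)
    (continuousOn_source g₂) fun h => ⟨hint g₁ h, hint g₂ h⟩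
  have hbound := abs_anchoredPrimitive_le hlam hn hs₀ (by positivity)
    ((continuousOn_source g₁).sub (continuousOn_source g₂))
    (fun u hu => abs_source_sub_source_le hlam hn g₁ g₂ (hs₀.trans hu)) hs
  rw [hsub] at hbound
  rw [profile, profile, sub_sub_sub_cancel_left, ← sub_div, abs_div, abs_of_pos hG,
    div_le_iff₀ hG, abs_sub_comm]
  linarith

theorem exists_forall_eq_profile (hlam : lam = -1 ∨ lam = 1) (hn : 2 ≤ n) {s₀ : ℝ}
    (hs₀ : 4 * n ≤ s₀) : ∃ g : ℝ →ᵇ ℝ, ∀ s, s₀ ≤ s → g s = profile lam n s₀ g s := by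
  have hs₀' : 0 < s₀ := by linarith
  let T (g : ℝ →ᵇ ℝ) : ℝ →ᵇ ℝ :=
    .ofNormedAddCommGroup (fun x => profile lam n s₀ g (max x s₀))
      ((continuousOn_profile hs₀' g).comp_continuous (continuous_id.max continuous_const)
        fun x => hs₀'.trans_le (le_max_right x s₀))
      (|2 * lam * (n - 1)| + 1 / 2) fun x => by
        have := abs_profile_sub_le hlam hn hs₀ g (le_max_right x s₀)
        rw [norm_eq_abs]
        linarith [abs_sub_abs_le_abs_sub (profile lam n s₀ g (max x s₀)) (2 * lam * (n - 1))]
  have hT : ContractingWith (1 / 2) T := by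
    refine ⟨by norm_num, LipschitzWith.of_dist_le_mul fun g₁ g₂ => ?_⟩
    refine (BoundedContinuousFunction.dist_le (by positivity)).2 fun x => ?_
    simpa [T, dist_eq] using abs_profile_sub_profile_le hlam hn hs₀ g₁ g₂ (le_max_right x s₀)
  refine ⟨ContractingWith.fixedPoint T hT, fun s hs => ?_⟩
  conv_lhs => rw [← hT.fixedPoint_isFixedPt]
  simp [T, max_eq_left hs]

theorem hasDerivAt_profile_div_pow_four (hlam : lam = -1 ∨ lam = 1) (hn : 2 ≤ n) {s₀ s : ℝ}
    (hs₀ : 4 * n ≤ s₀) {g : ℝ →ᵇ ℝ} (hg : ∀ s, s₀ ≤ s → g s = profile lam n s₀ g s)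
    (hs : s₀ ≤ s) :
    HasDerivAt (fun t => profile lam n s₀ g t / t ^ 4)
      (s * (2 * (n - 1) / s ^ 4 - (n + 1) * (profile lam n s₀ g s / s ^ 4) / s ^ 2
        - lam * (profile lam n s₀ g s / s ^ 4) - (profile lam n s₀ g s / s ^ 4) ^ 2)) s := by
  have hs₀' : 0 < s₀ := by linarith
  have hs' : 0 < s := hs₀'.trans_le hs
  set P := anchoredPrimitive lam s₀ (source lam n g) with hP
  have hY : HasDerivAt (fun t => 2 * lam * (n - 1) * weight lam n t - P t)
      (2 * lam * (n - 1) * weightDeriv lam n s - source lam n g s) s :=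
    ((hasDerivAt_weight hs').const_mul _).sub
      (hasDerivAt_anchoredPrimitive (continuousOn_source g) hs₀' hs')
  have hquot : ∀ t, 0 < t → (2 * lam * (n - 1) * weight lam n t - P t) / (t ^ 4 * weight lam n t)
      = profile lam n s₀ g t / t ^ 4 := fun t ht => by
    have := (weight_pos (lam := lam) (n := n) ht).ne'
    rw [profile, ← hP]; field_simp
  have hclamp : clamp lam n (g s) = profile lam n s₀ g s := by
    rw [hg s hs, clamp_of_abs_sub_le ((abs_profile_sub_le hlam hn hs₀ g hs).trans (by norm_num))]
  have hlam2 : lam * lam = 1 := by rcases hlam with rfl | rfl <;> norm_num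
  have hRiccati := hasDerivAt_riccati_of_integratingFactor hs'.ne'
    (mul_pos (pow_pos hs' 4) (weight_pos hs')).ne' (hasDerivAt_pow_four_mul_weight hs')
    (hY.congr_deriv (by
      rw [hquot s hs', source, weightDeriv, hclamp]
      have := (weight_pos (lam := lam) (n := n) hs').ne'
      field_simp
      linear_combination 2 * (n - 1) * s ^ 4 * hlam2))
  rw [hquot s hs'] at hRiccati
  exact hRiccati.congr_of_eventuallyEq <| eventually_of_mem (Ioi_mem_nhds hs')
    fun t ht => (hquot t ht).symm

end Riccati

end

/-- For `λ ∈ {−1,+1}` and real `n ≥ 2` there exist `s₀ > 0` and a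
differentiable solution `Z` on `[s₀,∞)` of the Riccati equation
`(1/s)·dZ/ds = 2(n−1)/s⁴ − (n+1)Z/s² − λZ − Z²` satisfying
`(2λ(n−1) − 1)/s⁴ ≤ Z(s) ≤ (2λ(n−1) + 1)/s⁴` for all `s ≥ s₀`; in particular
`Z(s) = (2λ(n−1) + O(1))·s⁻⁴` as `s → ∞`. -/
theorem riccati_solution_near_infinity
    (lam : ℝ) (hlam : lam = -1 ∨ lam = 1) (n : ℝ) (hn : 2 ≤ n) :
    ∃ s₀ > (0 : ℝ), ∃ Z : ℝ → ℝ,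
      (∀ s, s₀ ≤ s → HasDerivAt Z
        (s * (2 * (n - 1) / s ^ 4 - (n + 1) * Z s / s ^ 2 - lam * Z s - (Z s) ^ 2)) s) ∧
      (∀ s, s₀ ≤ s →
        (2 * lam * (n - 1) - 1) / s ^ 4 ≤ Z s ∧ Z s ≤ (2 * lam * (n - 1) + 1) / s ^ 4) ∧
      ((fun s => Z s - 2 * lam * (n - 1) / s ^ 4) =O[atTop] fun s => 1 / s ^ 4) := by
  obtain ⟨g, hg⟩ := Riccati.exists_forall_eq_profile hlam hn le_rfl
  set F := Riccati.profile lam n (4 * n) g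
  have hF (s : ℝ) (hs : 4 * n ≤ s) : |F s - 2 * lam * (n - 1)| ≤ 1 / 2 :=
    Riccati.abs_profile_sub_le hlam hn le_rfl g hs
  refine ⟨4 * n, by linarith, fun s => F s / s ^ 4,
    fun s hs => Riccati.hasDerivAt_profile_div_pow_four hlam hn le_rfl hg hs, fun s hs => ?_, ?_⟩
  · obtain ⟨h₁, h₂⟩ := abs_le.mp (hF s hs)
    have : 0 ≤ s ^ 4 := by positivity
    exact ⟨div_le_div_of_nonneg_right (by linarith) this,
      div_le_div_of_nonneg_right (by linarith) this⟩
  · refine IsBigO.of_bound (1 / 2) ?_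
    filter_upwards [eventually_ge_atTop (4 * n)] with s hs
    rw [← sub_div, norm_div, norm_div, norm_one, ← mul_div_assoc, mul_one]
    exact div_le_div_of_nonneg_right (hF s hs) (norm_nonneg _)
end

section
/- Let p₁, p₂ > 0 be real constants, let I ⊆ ℝ be an interval, and let u₁, u₂, v : I → ℝ be functions with u₁, u₂ twice differentiable and v differentiable, satisfying the mechanical system with λ = 0: ü_α = v·u̇_α + e^{−2u_α} for α = 1, 2, and v̇ = p₁ u̇₁² + p₂ u̇₂². Then the quantity I(s) := p₁(u̇₁(s)² + e^{−2u₁(s)}) + p₂(u̇₂(s)² + e^{−2u₂(s)}) − v(s)² is constant on I. -/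
/-!
Along `ü = v u̇ + e^{-2u}` the energy `u̇² + e^{-2u}` of one coordinate has derivative `2 v u̇²`:
the potential terms cancel. Hence the `p`-weighted sum of the two energies has derivative
`2 v (p₁ u̇₁² + p₂ u̇₂²) = 2 v v̇`, which is the derivative of `v²`.
-/

open Real

theorem Convex.eq_of_hasDerivWithinAt_zero {E : Type*} [NormedAddCommGroup E] [NormedSpace ℝ E]
    {f : ℝ → E} {s : Set ℝ} (hs : Convex ℝ s) (hf : ∀ x ∈ s, HasDerivWithinAt f 0 s x)
    {x y : ℝ} (hx : x ∈ s) (hy : y ∈ s) : f x = f y := by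
  have h := hs.norm_image_sub_le_of_norm_hasDerivWithin_le (C := 0) hf (fun _ _ ↦ by simp) hy hx
  rw [zero_mul, norm_le_zero_iff, sub_eq_zero] at h
  exact h

noncomputable def modeEnergy (u du : ℝ → ℝ) (s : ℝ) : ℝ :=
  du s ^ 2 + exp (-2 * u s)

theorem hasDerivAt_modeEnergy {u du : ℝ → ℝ} {w s : ℝ} (hu : HasDerivAt u (du s) s)
    (hdu : HasDerivAt du (w * du s + exp (-2 * u s)) s) :
    HasDerivAt (modeEnergy u du) (2 * w * du s ^ 2) s := by
  have h := (hdu.pow 2).add ((hu.const_mul (-2)).exp)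
  exact h.congr_deriv (by ring)

theorem mechanical_system_ivey_invariant_general
    (p₁ p₂ : ℝ)
    (I : Set ℝ) (hI : I.OrdConnected)
    (u₁ u₂ du₁ du₂ v : ℝ → ℝ)
    (hu₁ : ∀ s ∈ I, HasDerivAt u₁ (du₁ s) s)
    (hu₂ : ∀ s ∈ I, HasDerivAt u₂ (du₂ s) s)
    (hdu₁ : ∀ s ∈ I, HasDerivAt du₁ (v s * du₁ s + Real.exp (-2 * u₁ s)) s)
    (hdu₂ : ∀ s ∈ I, HasDerivAt du₂ (v s * du₂ s + Real.exp (-2 * u₂ s)) s)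
    (hv : ∀ s ∈ I, HasDerivAt v (p₁ * (du₁ s) ^ 2 + p₂ * (du₂ s) ^ 2) s) :
    ∀ s ∈ I, ∀ t ∈ I,
      p₁ * ((du₁ s) ^ 2 + Real.exp (-2 * u₁ s))
        + p₂ * ((du₂ s) ^ 2 + Real.exp (-2 * u₂ s)) - (v s) ^ 2
      = p₁ * ((du₁ t) ^ 2 + Real.exp (-2 * u₁ t))
        + p₂ * ((du₂ t) ^ 2 + Real.exp (-2 * u₂ t)) - (v t) ^ 2 := by
  intro s hs t ht
  have hderiv : ∀ x ∈ I, HasDerivWithinAt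
      (fun x ↦ p₁ * modeEnergy u₁ du₁ x + p₂ * modeEnergy u₂ du₂ x - v x ^ 2) 0 I x := by
    intro x hx
    have h₁ := hasDerivAt_modeEnergy (hu₁ x hx) (hdu₁ x hx)
    have h₂ := hasDerivAt_modeEnergy (hu₂ x hx) (hdu₂ x hx)
    have h := ((h₁.const_mul p₁).add (h₂.const_mul p₂)).sub ((hv x hx).pow 2)
    exact (h.congr_deriv (by ring)).hasDerivWithinAt
  exact hI.convex.eq_of_hasDerivWithinAt_zero hderiv hs ht

/-- For the mechanical system with `λ = 0`,
`ü_α = v·u̇_α + e^{−2u_α}` (α = 1,2), `v̇ = p₁u̇₁² + p₂u̇₂²`, the Ivey quantity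
`I(s) = p₁(u̇₁² + e^{−2u₁}) + p₂(u̇₂² + e^{−2u₂}) − v²` is constant on the interval. -/
theorem mechanical_system_ivey_invariant
    (p₁ p₂ : ℝ) (hp₁ : 0 < p₁) (hp₂ : 0 < p₂)
    (I : Set ℝ) (hI : I.OrdConnected)
    (u₁ u₂ du₁ du₂ v : ℝ → ℝ)
    (hu₁ : ∀ s ∈ I, HasDerivAt u₁ (du₁ s) s)
    (hu₂ : ∀ s ∈ I, HasDerivAt u₂ (du₂ s) s)
    (hdu₁ : ∀ s ∈ I, HasDerivAt du₁ (v s * du₁ s + Real.exp (-2 * u₁ s)) s)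
    (hdu₂ : ∀ s ∈ I, HasDerivAt du₂ (v s * du₂ s + Real.exp (-2 * u₂ s)) s)
    (hv : ∀ s ∈ I, HasDerivAt v (p₁ * (du₁ s) ^ 2 + p₂ * (du₂ s) ^ 2) s) :
    ∀ s ∈ I, ∀ t ∈ I,
      p₁ * ((du₁ s) ^ 2 + Real.exp (-2 * u₁ s))
        + p₂ * ((du₂ s) ^ 2 + Real.exp (-2 * u₂ s)) - (v s) ^ 2
      = p₁ * ((du₁ t) ^ 2 + Real.exp (-2 * u₁ t))
        + p₂ * ((du₂ t) ^ 2 + Real.exp (-2 * u₂ t)) - (v t) ^ 2 :=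
  mechanical_system_ivey_invariant_general p₁ p₂ I hI u₁ u₂ du₁ du₂ v hu₁ hu₂ hdu₁ hdu₂ hv
end

section
/- Let (x₁, y₁, x₂, y₂, Γ, σ) : [0, ∞) → ℝ⁶ be a differentiable solution of the soliton system that converges, as t → ∞, to the Ricci-flat cone fixed point rfc = (n−1, 0, n−1, 0, −n, 0). Then σ(t) = 0 and J(t) = 0 for all t ≥ 0. In particular, the stable set of rfc is contained in the joint zero set of σ and J. -/
/-!
If `f' = c f` with `c > 0` on `[0, ∞)`, then `f(t) e^{-ct}` is constant, and it tends to `0`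
when `f` does; so a solution decaying to `0` vanishes identically. This applies to `σ`. Once
`σ ≡ 0`, the soliton system gives `J' = 2J`, and `J` tends to its value at `rfc`, which is `0`
because `n = p₁ + p₂`; hence `J ≡ 0` as well.
-/

open Filter Topology

theorem eq_zero_of_hasDerivAt_const_mul_of_tendsto_zero {f : ℝ → ℝ} {c : ℝ} (hc : 0 < c)
    (hf : ∀ t, 0 ≤ t → HasDerivAt f (c * f t) t) (hlim : Tendsto f atTop (𝓝 0)) :
    ∀ t, 0 ≤ t → f t = 0 := by
  set g : ℝ → ℝ := fun s => f s * Real.exp (-(c * s))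
  have hg : ∀ s, 0 ≤ s → HasDerivAt g 0 s := fun s hs => by
    have hexp : HasDerivAt (fun s => Real.exp (-(c * s))) (Real.exp (-(c * s)) * -(c * 1)) s :=
      ((hasDerivAt_id' s).const_mul c).neg.exp
    exact ((hf s hs).fun_mul hexp).congr_deriv (by ring)
  have hg_const : ∀ t, 0 ≤ t → g t = g 0 := fun t ht =>
    constant_of_has_deriv_right_zero (fun s hs => (hg s hs.1).continuousAt.continuousWithinAt)
      (fun s hs => (hg s hs.1).hasDerivWithinAt) t ⟨ht, le_rfl⟩
  have hg_lim : Tendsto g atTop (𝓝 0) := by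
    simpa using hlim.mul (Real.tendsto_exp_atBot.comp
      (tendsto_neg_atTop_atBot.comp (tendsto_id.const_mul_atTop hc)))
  have hg0 : g 0 = 0 := tendsto_nhds_unique tendsto_const_nhds
    (hg_lim.congr' ((eventually_ge_atTop 0).mono hg_const))
  intro t ht
  simpa [g, hg0, (Real.exp_pos _).ne'] using hg_const t ht

noncomputable def solitonJ (p₁ p₂ x₁ y₁ x₂ y₂ Γ : ℝ) : ℝ :=
  (1 / 2) * (p₁ * (x₁ + (1 + y₁) ^ 2) + p₂ * (x₂ + (1 + y₂) ^ 2)) - (1 / 2) * Γ ^ 2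

theorem solitonJ_rfc {p₁ p₂ n : ℝ} (hn : n = p₁ + p₂) :
    solitonJ p₁ p₂ (n - 1) 0 (n - 1) 0 (-n) = 0 := by
  subst hn
  unfold solitonJ
  ring

section Trajectory

variable {p₁ p₂ : ℝ} {x₁ y₁ x₂ y₂ Γ : ℝ → ℝ}

theorem tendsto_solitonJ {l : Filter ℝ} {a₁ b₁ a₂ b₂ g : ℝ}
    (h₁ : Tendsto x₁ l (𝓝 a₁)) (h₂ : Tendsto y₁ l (𝓝 b₁)) (h₃ : Tendsto x₂ l (𝓝 a₂))
    (h₄ : Tendsto y₂ l (𝓝 b₂)) (h₅ : Tendsto Γ l (𝓝 g)) :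
    Tendsto (fun s => solitonJ p₁ p₂ (x₁ s) (y₁ s) (x₂ s) (y₂ s) (Γ s)) l
      (𝓝 (solitonJ p₁ p₂ a₁ b₁ a₂ b₂ g)) :=
  ((((h₁.add ((tendsto_const_nhds.add h₂).pow 2)).const_mul p₁).add
    ((h₃.add ((tendsto_const_nhds.add h₄).pow 2)).const_mul p₂)).const_mul (1 / 2)).sub
    ((h₅.pow 2).const_mul (1 / 2))

theorem hasDerivAt_solitonJ {x₁' y₁' x₂' y₂' Γ' t : ℝ}
    (h₁ : HasDerivAt x₁ x₁' t) (h₂ : HasDerivAt y₁ y₁' t) (h₃ : HasDerivAt x₂ x₂' t)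
    (h₄ : HasDerivAt y₂ y₂' t) (h₅ : HasDerivAt Γ Γ' t) :
    HasDerivAt (fun s => solitonJ p₁ p₂ (x₁ s) (y₁ s) (x₂ s) (y₂ s) (Γ s))
      ((1 / 2) * (p₁ * (x₁' + 2 * (1 + y₁ t) * y₁') + p₂ * (x₂' + 2 * (1 + y₂ t) * y₂'))
        - Γ t * Γ') t := by
  have hsq : ∀ {y : ℝ → ℝ} {y' : ℝ}, HasDerivAt y y' t →
      HasDerivAt (fun s => (1 + y s) ^ 2) (2 * (1 + y t) * y') t := fun h => by
    simpa using (h.const_add 1).fun_pow 2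
  exact ((((h₁.add (hsq h₂)).const_mul p₁).add ((h₃.add (hsq h₄)).const_mul p₂)).const_mul
    (1 / 2)).sub ((h₅.fun_pow 2).const_mul (1 / 2)) |>.congr_deriv (by ring)

theorem hasDerivAt_solitonJ_of_soliton {lam t : ℝ} {σ : ℝ → ℝ}
    (h₁ : HasDerivAt x₁ (-2 * x₁ t * y₁ t) t)
    (h₂ : HasDerivAt y₁ (x₁ t + (Γ t + 1 - lam * σ t) * y₁ t + Γ t + 1) t)
    (h₃ : HasDerivAt x₂ (-2 * x₂ t * y₂ t) t)
    (h₄ : HasDerivAt y₂ (x₂ t + (Γ t + 1 - lam * σ t) * y₂ t + Γ t + 1) t)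
    (h₅ : HasDerivAt Γ (Γ t + p₁ * (1 + y₁ t) ^ 2 + p₂ * (1 + y₂ t) ^ 2) t) :
    HasDerivAt (fun s => solitonJ p₁ p₂ (x₁ s) (y₁ s) (x₂ s) (y₂ s) (Γ s))
      (2 * solitonJ p₁ p₂ (x₁ t) (y₁ t) (x₂ t) (y₂ t) (Γ t)
        - lam * σ t * (p₁ * y₁ t * (1 + y₁ t) + p₂ * y₂ t * (1 + y₂ t))) t :=
  (hasDerivAt_solitonJ h₁ h₂ h₃ h₄ h₅).congr_deriv (by unfold solitonJ; ring)

end Trajectory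

theorem stable_set_of_rfc_in_zero_set_of_sigma_and_J_general
    (p₁ p₂ : ℤ) (lam : ℝ)
    (n : ℝ) (hn : n = (p₁ : ℝ) + (p₂ : ℝ))
    (x₁ y₁ x₂ y₂ Γ σ : ℝ → ℝ)
    (hx₁ : ∀ t, 0 ≤ t → HasDerivAt x₁ (-2 * x₁ t * y₁ t) t)
    (hy₁ : ∀ t, 0 ≤ t → HasDerivAt y₁ (x₁ t + (Γ t + 1 - lam * σ t) * y₁ t + Γ t + 1) t)
    (hx₂ : ∀ t, 0 ≤ t → HasDerivAt x₂ (-2 * x₂ t * y₂ t) t)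
    (hy₂ : ∀ t, 0 ≤ t → HasDerivAt y₂ (x₂ t + (Γ t + 1 - lam * σ t) * y₂ t + Γ t + 1) t)
    (hΓ : ∀ t, 0 ≤ t → HasDerivAt Γ
      (Γ t + (p₁ : ℝ) * (1 + y₁ t) ^ 2 + (p₂ : ℝ) * (1 + y₂ t) ^ 2) t)
    (hσ : ∀ t, 0 ≤ t → HasDerivAt σ (2 * σ t) t)
    (hlim₁ : Filter.Tendsto x₁ Filter.atTop (nhds (n - 1)))
    (hlim₂ : Filter.Tendsto y₁ Filter.atTop (nhds 0))
    (hlim₃ : Filter.Tendsto x₂ Filter.atTop (nhds (n - 1)))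
    (hlim₄ : Filter.Tendsto y₂ Filter.atTop (nhds 0))
    (hlim₅ : Filter.Tendsto Γ Filter.atTop (nhds (-n)))
    (hlim₆ : Filter.Tendsto σ Filter.atTop (nhds 0)) :
    ∀ t, 0 ≤ t → σ t = 0 ∧
      (1 / 2) * ((p₁ : ℝ) * (x₁ t + (1 + y₁ t) ^ 2) + (p₂ : ℝ) * (x₂ t + (1 + y₂ t) ^ 2))
        - (1 / 2) * (Γ t) ^ 2 = 0 := by
  have hσ_zero := eq_zero_of_hasDerivAt_const_mul_of_tendsto_zero two_pos hσ hlim₆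
  have hJ : ∀ t, 0 ≤ t → HasDerivAt (fun s => solitonJ p₁ p₂ (x₁ s) (y₁ s) (x₂ s) (y₂ s) (Γ s))
      (2 * solitonJ p₁ p₂ (x₁ t) (y₁ t) (x₂ t) (y₂ t) (Γ t)) t := fun t ht =>
    (hasDerivAt_solitonJ_of_soliton (hx₁ t ht) (hy₁ t ht) (hx₂ t ht) (hy₂ t ht)
      (hΓ t ht)).congr_deriv (by rw [hσ_zero t ht]; ring)
  have hJ_lim : Tendsto (fun s => solitonJ p₁ p₂ (x₁ s) (y₁ s) (x₂ s) (y₂ s) (Γ s)) atTop (𝓝 0) :=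
    solitonJ_rfc hn ▸ tendsto_solitonJ hlim₁ hlim₂ hlim₃ hlim₄ hlim₅
  exact fun t ht =>
    ⟨hσ_zero t ht, eq_zero_of_hasDerivAt_const_mul_of_tendsto_zero two_pos hJ hJ_lim t ht⟩

/-- Any solution of the soliton system on `[0,∞)` that converges
as `t → ∞` to the Ricci-flat cone fixed point `rfc = (n−1, 0, n−1, 0, −n, 0)`
satisfies `σ(t) = 0` and `J(t) = 0` for all `t ≥ 0`; in particular the stable set of
`rfc` lies in the joint zero set of `σ` and `J`. -/
theorem stable_set_of_rfc_in_zero_set_of_sigma_and_J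
    (p₁ p₂ : ℤ) (hp₁ : 2 ≤ p₁) (hp₂ : 2 ≤ p₂) (lam : ℝ)
    (n : ℝ) (hn : n = (p₁ : ℝ) + (p₂ : ℝ))
    (x₁ y₁ x₂ y₂ Γ σ : ℝ → ℝ)
    (hx₁ : ∀ t, 0 ≤ t → HasDerivAt x₁ (-2 * x₁ t * y₁ t) t)
    (hy₁ : ∀ t, 0 ≤ t → HasDerivAt y₁ (x₁ t + (Γ t + 1 - lam * σ t) * y₁ t + Γ t + 1) t)
    (hx₂ : ∀ t, 0 ≤ t → HasDerivAt x₂ (-2 * x₂ t * y₂ t) t)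
    (hy₂ : ∀ t, 0 ≤ t → HasDerivAt y₂ (x₂ t + (Γ t + 1 - lam * σ t) * y₂ t + Γ t + 1) t)
    (hΓ : ∀ t, 0 ≤ t → HasDerivAt Γ
      (Γ t + (p₁ : ℝ) * (1 + y₁ t) ^ 2 + (p₂ : ℝ) * (1 + y₂ t) ^ 2) t)
    (hσ : ∀ t, 0 ≤ t → HasDerivAt σ (2 * σ t) t)
    (hlim₁ : Filter.Tendsto x₁ Filter.atTop (nhds (n - 1)))
    (hlim₂ : Filter.Tendsto y₁ Filter.atTop (nhds 0))
    (hlim₃ : Filter.Tendsto x₂ Filter.atTop (nhds (n - 1)))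
    (hlim₄ : Filter.Tendsto y₂ Filter.atTop (nhds 0))
    (hlim₅ : Filter.Tendsto Γ Filter.atTop (nhds (-n)))
    (hlim₆ : Filter.Tendsto σ Filter.atTop (nhds 0)) :
    ∀ t, 0 ≤ t → σ t = 0 ∧
      (1 / 2) * ((p₁ : ℝ) * (x₁ t + (1 + y₁ t) ^ 2) + (p₂ : ℝ) * (x₂ t + (1 + y₂ t) ^ 2))
        - (1 / 2) * (Γ t) ^ 2 = 0 :=
  stable_set_of_rfc_in_zero_set_of_sigma_and_J_general p₁ p₂ lam n hn x₁ y₁ x₂ y₂ Γ σ hx₁ hy₁ hx₂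
    hy₂ hΓ hσ hlim₁ hlim₂ hlim₃ hlim₄ hlim₅ hlim₆
end

section
/- Let (x₁, y₁, x₂, y₂, Γ, σ) : (−∞, t₀] → ℝ⁶ be a differentiable solution of the soliton system with σ(t) = 0 and J(t) = 0 for all t ≤ t₀, and suppose the solution converges, as t → −∞, to the Good Fill fixed point gf = (p₁−1, 0, 0, −1, −p₁, 0). Then F(t) = 0 for all t ≤ t₀. -/
/-!
Using `σ = 0` and `J = 0`, the function `F` satisfies the scalar linear equation
`F' = (Γ + 1) F`. Near `−∞` we have `Γ + 1 < 0`, so `F²` is nonincreasing there; since `F → 0`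
at `−∞`, this forces `F = 0` on a half-line `(−∞, a]`. Grönwall's inequality for the linear
equation then propagates `F(a) = 0` to all of `[a, t₀]`.
-/

open Filter Set Topology

def solitonF (p₁ p₂ : ℝ) (y₁ y₂ Γ : ℝ → ℝ) (t : ℝ) : ℝ :=
  Γ t + p₁ * (1 + y₁ t) + p₂ * (1 + y₂ t)

section LinearScalarODE

variable {f g : ℝ → ℝ}

theorem eqOn_zero_Iic_of_hasDerivAt_mul_self_of_nonpos {a : ℝ}
    (hf : ∀ t ≤ a, HasDerivAt f (g t * f t) t) (hg : ∀ t ≤ a, g t ≤ 0)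
    (hlim : Tendsto f atBot (𝓝 0)) : ∀ t ≤ a, f t = 0 := by
  have hanti : AntitoneOn (fun t => f t ^ 2) (Iic a) := by
    refine antitoneOn_of_hasDerivWithinAt_nonpos (convex_Iic a)
      (f' := fun t => 2 * f t ^ 1 * (g t * f t)) ?_ ?_ ?_
    · exact fun t ht => ((hf t ht).continuousAt.pow 2).continuousWithinAt
    · rw [interior_Iic]
      exact fun t ht => ((hf t ht.le).pow 2).hasDerivWithinAt
    · rw [interior_Iic]
      intro t ht
      nlinarith [hg t ht.le, sq_nonneg (f t)]
  intro t ht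
  have hsq_lim : Tendsto (fun s => f s ^ 2) atBot (𝓝 0) := by simpa using hlim.pow 2
  have hsq : f t ^ 2 ≤ 0 :=
    ge_of_tendsto hsq_lim (eventually_atBot.2 ⟨t, fun s hs => hanti (hs.trans ht) ht hs⟩)
  exact (sq_nonpos_iff _).1 hsq

theorem eqOn_zero_Icc_of_hasDerivAt_mul_self {a b : ℝ}
    (hf : ∀ t ∈ Icc a b, HasDerivAt f (g t * f t) t) (hg : ContinuousOn g (Icc a b))
    (ha : f a = 0) : ∀ t ∈ Icc a b, f t = 0 := by
  obtain ⟨K, hK⟩ := isCompact_Icc.exists_bound_of_continuousOn hg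
  have hbound := norm_le_gronwallBound_of_norm_deriv_right_le (δ := 0) (ε := 0)
    (fun t ht => (hf t ht).continuousAt.continuousWithinAt)
    (fun t ht => (hf t (Ico_subset_Icc_self ht)).hasDerivWithinAt)
    (by simp [ha])
    (fun t ht => by
      rw [norm_mul, add_zero]
      exact mul_le_mul_of_nonneg_right (hK t (Ico_subset_Icc_self ht)) (norm_nonneg _))
  intro t ht
  simpa [gronwallBound_ε0] using hbound t ht

theorem eqOn_zero_Iic_of_hasDerivAt_mul_self_of_tendsto_atBot {b : ℝ}
    (hf : ∀ t ≤ b, HasDerivAt f (g t * f t) t) (hg : ContinuousOn g (Iic b))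
    (hg_nonpos : ∀ᶠ t in atBot, g t ≤ 0) (hlim : Tendsto f atBot (𝓝 0)) :
    ∀ t ≤ b, f t = 0 := by
  obtain ⟨a, ha⟩ := (hg_nonpos.and (eventually_le_atBot b)).exists_forall_of_atBot
  have hab : a ≤ b := (ha a le_rfl).2
  have hzero_Iic := eqOn_zero_Iic_of_hasDerivAt_mul_self_of_nonpos
    (fun t ht => hf t (ht.trans hab)) (fun t ht => (ha t ht).1) hlim
  intro t ht
  rcases le_total t a with hta | hat
  · exact hzero_Iic t hta
  · exact eqOn_zero_Icc_of_hasDerivAt_mul_self (fun s hs => hf s hs.2)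
      (hg.mono Icc_subset_Iic_self) (hzero_Iic a le_rfl) t ⟨hat, ht⟩

end LinearScalarODE

theorem hasDerivAt_solitonF {p₁ p₂ lam t : ℝ} {x₁ y₁ x₂ y₂ Γ σ : ℝ → ℝ}
    (hy₁ : HasDerivAt y₁ (x₁ t + (Γ t + 1 - lam * σ t) * y₁ t + Γ t + 1) t)
    (hy₂ : HasDerivAt y₂ (x₂ t + (Γ t + 1 - lam * σ t) * y₂ t + Γ t + 1) t)
    (hΓ : HasDerivAt Γ (Γ t + p₁ * (1 + y₁ t) ^ 2 + p₂ * (1 + y₂ t) ^ 2) t)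
    (hσ : σ t = 0)
    (hJ : (1 / 2) * (p₁ * (x₁ t + (1 + y₁ t) ^ 2) + p₂ * (x₂ t + (1 + y₂ t) ^ 2))
      - (1 / 2) * (Γ t) ^ 2 = 0) :
    HasDerivAt (solitonF p₁ p₂ y₁ y₂ Γ) ((Γ t + 1) * solitonF p₁ p₂ y₁ y₂ Γ t) t := by
  refine ((hΓ.add ((hy₁.const_add 1).const_mul p₁)).add
    ((hy₂.const_add 1).const_mul p₂)).congr_deriv ?_
  rw [hσ, solitonF]
  linear_combination 2 * hJ

theorem tendsto_solitonF_atBot {p₁ p₂ : ℝ} {y₁ y₂ Γ : ℝ → ℝ}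
    (hy₁ : Tendsto y₁ atBot (𝓝 0)) (hy₂ : Tendsto y₂ atBot (𝓝 (-1)))
    (hΓ : Tendsto Γ atBot (𝓝 (-p₁))) :
    Tendsto (solitonF p₁ p₂ y₁ y₂ Γ) atBot (𝓝 0) := by
  have h := (hΓ.add ((hy₁.const_add 1).const_mul p₁)).add ((hy₂.const_add 1).const_mul p₂)
  norm_num at h
  exact h

theorem F_vanishes_on_orbits_from_good_fill_general
    (p₁ p₂ : ℤ) (hp₁ : 2 ≤ p₁) (lam : ℝ)
    (t₀ : ℝ)
    (x₁ y₁ x₂ y₂ Γ σ : ℝ → ℝ)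
    (hy₁ : ∀ t, t ≤ t₀ → HasDerivAt y₁ (x₁ t + (Γ t + 1 - lam * σ t) * y₁ t + Γ t + 1) t)
    (hy₂ : ∀ t, t ≤ t₀ → HasDerivAt y₂ (x₂ t + (Γ t + 1 - lam * σ t) * y₂ t + Γ t + 1) t)
    (hΓ : ∀ t, t ≤ t₀ → HasDerivAt Γ
      (Γ t + (p₁ : ℝ) * (1 + y₁ t) ^ 2 + (p₂ : ℝ) * (1 + y₂ t) ^ 2) t)
    (hσ0 : ∀ t, t ≤ t₀ → σ t = 0)
    (hJ0 : ∀ t, t ≤ t₀ →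
      (1 / 2) * ((p₁ : ℝ) * (x₁ t + (1 + y₁ t) ^ 2) + (p₂ : ℝ) * (x₂ t + (1 + y₂ t) ^ 2))
        - (1 / 2) * (Γ t) ^ 2 = 0)
    (hlim₂ : Filter.Tendsto y₁ Filter.atBot (nhds 0))
    (hlim₄ : Filter.Tendsto y₂ Filter.atBot (nhds (-1)))
    (hlim₅ : Filter.Tendsto Γ Filter.atBot (nhds (-(p₁ : ℝ)))) :
    ∀ t, t ≤ t₀ → Γ t + (p₁ : ℝ) * (1 + y₁ t) + (p₂ : ℝ) * (1 + y₂ t) = 0 := by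
  have hp₁' : (1 : ℝ) < p₁ := by exact_mod_cast (by omega : 1 < p₁)
  have hF : ∀ t ≤ t₀, HasDerivAt (solitonF p₁ p₂ y₁ y₂ Γ)
      ((Γ t + 1) * solitonF p₁ p₂ y₁ y₂ Γ t) t := fun t ht =>
    hasDerivAt_solitonF (hy₁ t ht) (hy₂ t ht) (hΓ t ht) (hσ0 t ht) (hJ0 t ht)
  have hΓ_cont : ContinuousOn (fun t => Γ t + 1) (Iic t₀) := fun t ht =>
    ((hΓ t ht).continuousAt.add continuousAt_const).continuousWithinAt
  have hΓ_nonpos : ∀ᶠ t in atBot, Γ t + 1 ≤ 0 :=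
    (hlim₅.add_const 1).eventually (ge_mem_nhds (by linarith))
  exact eqOn_zero_Iic_of_hasDerivAt_mul_self_of_tendsto_atBot hF hΓ_cont hΓ_nonpos
    (tendsto_solitonF_atBot hlim₂ hlim₄ hlim₅)

/-- A solution of the soliton system on `(−∞, t₀]` with `σ ≡ 0`
and `J ≡ 0` that converges, as `t → −∞`, to the Good Fill fixed point
`gf = (p₁−1, 0, 0, −1, −p₁, 0)` satisfies `F(t) = 0` for all `t ≤ t₀`, where
`F = Γ + Σ_{α} p_α (1 + y_α)`. -/
theorem F_vanishes_on_orbits_from_good_fill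
    (p₁ p₂ : ℤ) (hp₁ : 2 ≤ p₁) (hp₂ : 2 ≤ p₂) (lam : ℝ)
    (t₀ : ℝ)
    (x₁ y₁ x₂ y₂ Γ σ : ℝ → ℝ)
    (hx₁ : ∀ t, t ≤ t₀ → HasDerivAt x₁ (-2 * x₁ t * y₁ t) t)
    (hy₁ : ∀ t, t ≤ t₀ → HasDerivAt y₁ (x₁ t + (Γ t + 1 - lam * σ t) * y₁ t + Γ t + 1) t)
    (hx₂ : ∀ t, t ≤ t₀ → HasDerivAt x₂ (-2 * x₂ t * y₂ t) t)
    (hy₂ : ∀ t, t ≤ t₀ → HasDerivAt y₂ (x₂ t + (Γ t + 1 - lam * σ t) * y₂ t + Γ t + 1) t)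
    (hΓ : ∀ t, t ≤ t₀ → HasDerivAt Γ
      (Γ t + (p₁ : ℝ) * (1 + y₁ t) ^ 2 + (p₂ : ℝ) * (1 + y₂ t) ^ 2) t)
    (hσ : ∀ t, t ≤ t₀ → HasDerivAt σ (2 * σ t) t)
    (hσ0 : ∀ t, t ≤ t₀ → σ t = 0)
    (hJ0 : ∀ t, t ≤ t₀ →
      (1 / 2) * ((p₁ : ℝ) * (x₁ t + (1 + y₁ t) ^ 2) + (p₂ : ℝ) * (x₂ t + (1 + y₂ t) ^ 2))
        - (1 / 2) * (Γ t) ^ 2 = 0)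
    (hlim₁ : Filter.Tendsto x₁ Filter.atBot (nhds ((p₁ : ℝ) - 1)))
    (hlim₂ : Filter.Tendsto y₁ Filter.atBot (nhds 0))
    (hlim₃ : Filter.Tendsto x₂ Filter.atBot (nhds 0))
    (hlim₄ : Filter.Tendsto y₂ Filter.atBot (nhds (-1)))
    (hlim₅ : Filter.Tendsto Γ Filter.atBot (nhds (-(p₁ : ℝ))))
    (hlim₆ : Filter.Tendsto σ Filter.atBot (nhds 0)) :
    ∀ t, t ≤ t₀ → Γ t + (p₁ : ℝ) * (1 + y₁ t) + (p₂ : ℝ) * (1 + y₂ t) = 0 :=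
  F_vanishes_on_orbits_from_good_fill_general p₁ p₂ hp₁ lam t₀ x₁ y₁ x₂ y₂ Γ σ hy₁ hy₂ hΓ hσ0 hJ0
    hlim₂ hlim₄ hlim₅
end
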